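/- arXiv:2105.11419 — 11 statements merged into one kernel-verified Lean document; each statement's English description precedes it below -/
import Mathlib

section
/- The zero solution of the swarm system is unstable: for every integer n ≥ 1 there exists ε > 0 such that for every δ > 0 there is a solution r = (r_1, …, r_n) of the swarm system on [0, ∞) with max_k (|r_k(0)| + |ṙ_k(0)|) < δ, and a time t > 0 with max_k (|r_k(t)| + |ṙ_k(t)|) ≥ ε. -/
/-!
If all agents start at the origin with a common velocity and move in lockstep, each of them
sits at the centre of mass, so the coupling term vanishes and the common velocity obeys
`v̇ = (1 - |v|²) v`. Every nonzero solution of this equation tends to unit speed, however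
small it starts.
-/

open scoped BigOperators

/-- `r` (positions) together with `r'` (velocities) is a solution of the swarm system
`r̈ₖ = (1 - |ṙₖ|²) ṙₖ - (rₖ - R)`, `R = (r₁ + ⋯ + rₙ)/n`, on `[0, ∞)`. -/
def IsSwarmSolution (n : ℕ) (r r' : Fin n → ℝ → ℂ) : Prop :=
  ∀ k, ∀ t : ℝ, 0 ≤ t →
    HasDerivAt (r k) (r' k t) t ∧
    HasDerivAt (r' k)
      (((1 - ‖r' k t‖ ^ 2 : ℝ) : ℂ) * r' k t -
        (r k t - (∑ j, r j t) / (n : ℂ))) t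

open Filter Topology Real

lemma isSwarmSolution_synchronized {n : ℕ} (hn : n ≠ 0) {v : ℝ → ℂ} (hcont : Continuous v)
    (hv : ∀ t, 0 ≤ t → HasDerivAt v (((1 - ‖v t‖ ^ 2 : ℝ) : ℂ) * v t) t) :
    IsSwarmSolution n (fun _ t => ∫ s in (0 : ℝ)..t, v s) (fun _ => v) := by
  intro k t ht
  refine ⟨(hcont.integral_hasStrictDerivAt 0 t).hasDerivAt, ?_⟩
  have hcenter : (∑ _j : Fin n, ∫ s in (0 : ℝ)..t, v s) / (n : ℂ) = ∫ s in (0 : ℝ)..t, v s := by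
    rw [Finset.sum_const, Finset.card_univ, Fintype.card_fin, nsmul_eq_mul,
      mul_div_cancel_left₀ _ (Nat.cast_ne_zero.2 hn)]
  rw [hcenter, sub_self, sub_zero]
  exact hv t ht

/-- The speed equation `v̇ = (1 - v²) v` is linear in `w = v⁻² - 1`, namely `ẇ = -2 w`;
this is its solution with `w(0) = c`. -/
noncomputable def swarmSpeed (c t : ℝ) : ℝ := (√(1 + c * exp (-2 * t)))⁻¹

lemma swarmSpeed_zero (c : ℝ) : swarmSpeed c 0 = (√(1 + c))⁻¹ := by
  simp [swarmSpeed]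

lemma hasDerivAt_swarmSpeed {c : ℝ} (hc : 0 ≤ c) (t : ℝ) :
    HasDerivAt (swarmSpeed c) ((1 - swarmSpeed c t ^ 2) * swarmSpeed c t) t := by
  have hpos : 0 < 1 + c * exp (-2 * t) := by positivity
  have hinner : HasDerivAt (fun t => 1 + c * exp (-2 * t)) (-2 * (c * exp (-2 * t))) t :=
    ((((hasDerivAt_id t).const_mul (-2)).exp.const_mul c).const_add 1).congr_deriv
      (by simp only [id]; ring)
  refine ((hinner.sqrt hpos.ne').inv (sqrt_pos.2 hpos).ne').congr_deriv ?_
  have hsq := sq_sqrt hpos.le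
  simp only [swarmSpeed]
  generalize c * exp (-2 * t) = u at hpos hsq ⊢
  field_simp
  rw [hsq]
  ring

lemma swarmSpeed_nonneg (c t : ℝ) : 0 ≤ swarmSpeed c t :=
  inv_nonneg.2 (sqrt_nonneg _)

lemma continuous_swarmSpeed {c : ℝ} (hc : 0 ≤ c) : Continuous (swarmSpeed c) :=
  continuous_iff_continuousAt.2 fun t => (hasDerivAt_swarmSpeed hc t).continuousAt

lemma tendsto_swarmSpeed_atTop (c : ℝ) : Tendsto (swarmSpeed c) atTop (𝓝 1) := by
  have hexp : Tendsto (fun t : ℝ => exp (-2 * t)) atTop (𝓝 0) :=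
    tendsto_exp_atBot.comp (tendsto_id.const_mul_atTop_of_neg (by norm_num))
  convert (((hexp.const_mul c).const_add 1).sqrt).inv₀ (by simp) <;> simp [swarmSpeed]

lemma swarmSpeed_inv_sq_zero_lt {δ : ℝ} (hδ : 0 < δ) : swarmSpeed (δ⁻¹ ^ 2) 0 < δ := by
  rw [swarmSpeed_zero]
  have : δ⁻¹ < √(1 + δ⁻¹ ^ 2) := (lt_sqrt (by positivity)).2 (by linarith)
  exact (inv_lt_comm₀ (sqrt_pos.2 (by positivity)) hδ).2 this

/-- The zero solution of the swarm system is unstable. -/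
theorem zero_solution_unstable (n : ℕ) (hn : 1 ≤ n) :
    ∃ ε > 0, ∀ δ > 0, ∃ r r' : Fin n → ℝ → ℂ,
      IsSwarmSolution n r r' ∧
      (∀ k, ‖r k 0‖ + ‖r' k 0‖ < δ) ∧
      ∃ t : ℝ, 0 < t ∧ ∃ k, ε ≤ ‖r k t‖ + ‖r' k t‖ := by
  refine ⟨1 / 2, one_half_pos, fun δ hδ => ?_⟩
  set c := δ⁻¹ ^ 2
  have hc : 0 ≤ c := by positivity
  set v : ℝ → ℂ := fun t => (swarmSpeed c t : ℂ)
  have hnorm (t : ℝ) : ‖v t‖ = swarmSpeed c t := by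
    simp [v, abs_of_nonneg (swarmSpeed_nonneg c t)]
  have hv (t : ℝ) (_ : 0 ≤ t) : HasDerivAt v (((1 - ‖v t‖ ^ 2 : ℝ) : ℂ) * v t) t := by
    rw [hnorm, ← Complex.ofReal_mul]
    exact (hasDerivAt_swarmSpeed hc t).ofReal_comp
  obtain ⟨t, htv, ht⟩ := (((tendsto_swarmSpeed_atTop c).eventually
    (lt_mem_nhds one_half_lt_one)).and (eventually_gt_atTop 0)).exists
  refine ⟨_, _, isSwarmSolution_synchronized (v := v) (by omega)
    (Complex.continuous_ofReal.comp (continuous_swarmSpeed hc)) hv, fun _ => ?_,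
    t, ht, ⟨0, hn⟩, ?_⟩
  · rw [intervalIntegral.integral_same, norm_zero, zero_add, hnorm]
    exact swarmSpeed_inv_sq_zero_lt hδ
  · rw [hnorm]
    linarith [norm_nonneg (∫ s in (0 : ℝ)..t, v s)]
end

section
/- Along any solution (x, y, u, v) : I → ℝ⁴ of the first-order system ẋ = u, ẏ = v, u̇ = (1 − u² − v²) u − x, v̇ = (1 − u² − v²) v − y, the function W(t) = v(t) x(t) − u(t) y(t) satisfies Ẇ(t) = (1 − u(t)² − v(t)²) W(t) for all t ∈ I. Consequently, if W(t₁) = 0 at some t₁ ∈ I then W ≡ 0 on I; if W(t₁) > 0 then W(t) > 0 for all t ∈ I; and if W(t₁) < 0 then W(t) < 0 for all t ∈ I. -/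
/-!
`W = v x - u y` is the angular momentum of the planar motion `r̈ = (1 - |ṙ|²) ṙ - r`. The force
`-r` is central and the friction term is parallel to the velocity, so only the friction changes
`W`, giving the scalar linear ODE `Ẇ = (1 - |ṙ|²) W`. By uniqueness for this ODE (its coefficient
is bounded on compact subintervals), `W` vanishes identically as soon as it vanishes once, and the
intermediate value theorem then forbids any change of sign.
-/

open Set

section LinearODE

variable {E : Type*} [NormedAddCommGroup E] [NormedSpace ℝ E] {f : ℝ → E} {a : ℝ → ℝ}

theorem eqOn_zero_Icc_of_hasDerivAt_smul {b c t₀ : ℝ} (ha : ContinuousOn a (Icc b c))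
    (hf : ∀ t ∈ Icc b c, HasDerivAt f (a t • f t) t) (ht₀ : t₀ ∈ Icc b c) (h0 : f t₀ = 0) :
    EqOn f 0 (Icc b c) := by
  obtain ⟨K, hK⟩ := isCompact_Icc.exists_bound_of_continuousOn ha
  have hlip : ∀ t ∈ Icc b c, LipschitzOnWith K.toNNReal (a t • ·) (univ : Set E) :=
    fun t ht => ((lipschitzWith_smul (a t)).weaken <|
      (Real.le_toNNReal_iff_coe_le ((norm_nonneg _).trans (hK t ht))).2 (hK t ht)).lipschitzOnWith
  have hfc : ContinuousOn f (Icc b c) := HasDerivAt.continuousOn hf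
  have h0' : ∀ t, HasDerivAt (0 : ℝ → E) (a t • (0 : ℝ → E) t) t := fun t => by simp
  rw [← Icc_union_Icc_eq_Icc ht₀.1 ht₀.2]
  refine EqOn.union ?_ ?_
  · have hsub : Icc b t₀ ⊆ Icc b c := Icc_subset_Icc_right ht₀.2
    exact ODE_solution_unique_of_mem_Icc_left (fun t ht => hlip t (hsub (Ioc_subset_Icc_self ht)))
      (hfc.mono hsub) (fun t ht => (hf t (hsub (Ioc_subset_Icc_self ht))).hasDerivWithinAt)
      (fun _ _ => mem_univ _) continuousOn_const (fun t _ => (h0' t).hasDerivWithinAt)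
      (fun _ _ => mem_univ _) h0
  · have hsub : Icc t₀ c ⊆ Icc b c := Icc_subset_Icc_left ht₀.1
    exact ODE_solution_unique_of_mem_Icc_right (fun t ht => hlip t (hsub (Ico_subset_Icc_self ht)))
      (hfc.mono hsub) (fun t ht => (hf t (hsub (Ico_subset_Icc_self ht))).hasDerivWithinAt)
      (fun _ _ => mem_univ _) continuousOn_const (fun t _ => (h0' t).hasDerivWithinAt)
      (fun _ _ => mem_univ _) h0

theorem Set.OrdConnected.eqOn_zero_of_hasDerivAt_smul {I : Set ℝ} (hI : I.OrdConnected)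
    (ha : ContinuousOn a I) (hf : ∀ t ∈ I, HasDerivAt f (a t • f t) t) {t₀ : ℝ} (ht₀ : t₀ ∈ I)
    (h0 : f t₀ = 0) : EqOn f 0 I := fun t ht => by
  have hsub : uIcc t₀ t ⊆ I := hI.uIcc_subset ht₀ ht
  exact eqOn_zero_Icc_of_hasDerivAt_smul (ha.mono hsub) (fun s hs => hf s (hsub hs))
    ⟨min_le_left _ _, le_max_left _ _⟩ h0 ⟨min_le_right _ _, le_max_right _ _⟩

end LinearODE

section Sign

variable {X α : Type*} [TopologicalSpace X] [LinearOrder α] [TopologicalSpace α]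
  [OrderClosedTopology α] {s : Set X} {f : X → α} {c : α} {x₀ x : X}

theorem IsPreconnected.const_lt_of_forall_ne (hs : IsPreconnected s) (hf : ContinuousOn f s)
    (hne : ∀ y ∈ s, f y ≠ c) (hx₀ : x₀ ∈ s) (hx : x ∈ s) (hlt : c < f x₀) : c < f x := by
  by_contra! hle
  obtain ⟨y, hy, hfy⟩ := hs.intermediate_value hx hx₀ hf ⟨hle, hlt.le⟩
  exact hne y hy hfy

theorem IsPreconnected.lt_const_of_forall_ne (hs : IsPreconnected s) (hf : ContinuousOn f s)
    (hne : ∀ y ∈ s, f y ≠ c) (hx₀ : x₀ ∈ s) (hx : x ∈ s) (hlt : f x₀ < c) : f x < c := by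
  by_contra! hle
  obtain ⟨y, hy, hfy⟩ := hs.intermediate_value hx₀ hx hf ⟨hlt.le, hle⟩
  exact hne y hy hfy

end Sign

theorem hasDerivAt_angularMomentum {x y u v : ℝ → ℝ} {k c t : ℝ}
    (hx : HasDerivAt x (u t) t) (hy : HasDerivAt y (v t) t)
    (hu : HasDerivAt u (k * u t - c * x t) t) (hv : HasDerivAt v (k * v t - c * y t) t) :
    HasDerivAt (fun s => v s * x s - u s * y s) (k * (v t * x t - u t * y t)) t :=
  ((hv.mul hx).sub (hu.mul hy)).congr_deriv (by ring)

/-- Along solutions of `ẋ = u, ẏ = v, u̇ = (1-u²-v²)u - x, v̇ = (1-u²-v²)v - y`,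
the function `W = vx - uy` satisfies `Ẇ = (1-u²-v²) W`; consequently the sign of `W`
is constant along trajectories. -/
theorem W_equation_and_sign (I : Set ℝ) (hI : I.OrdConnected)
    (x y u v : ℝ → ℝ)
    (hx : ∀ t ∈ I, HasDerivAt x (u t) t)
    (hy : ∀ t ∈ I, HasDerivAt y (v t) t)
    (hu : ∀ t ∈ I, HasDerivAt u ((1 - u t ^ 2 - v t ^ 2) * u t - x t) t)
    (hv : ∀ t ∈ I, HasDerivAt v ((1 - u t ^ 2 - v t ^ 2) * v t - y t) t) :
    (∀ t ∈ I, HasDerivAt (fun s => v s * x s - u s * y s)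
        ((1 - u t ^ 2 - v t ^ 2) * (v t * x t - u t * y t)) t) ∧
    (∀ t₁ ∈ I,
      (v t₁ * x t₁ - u t₁ * y t₁ = 0 → ∀ t ∈ I, v t * x t - u t * y t = 0) ∧
      (0 < v t₁ * x t₁ - u t₁ * y t₁ → ∀ t ∈ I, 0 < v t * x t - u t * y t) ∧
      (v t₁ * x t₁ - u t₁ * y t₁ < 0 → ∀ t ∈ I, v t * x t - u t * y t < 0)) := by
  have hW : ∀ t ∈ I, HasDerivAt (fun s => v s * x s - u s * y s)
      ((1 - u t ^ 2 - v t ^ 2) * (v t * x t - u t * y t)) t := fun t ht =>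
    hasDerivAt_angularMomentum (c := 1) (hx t ht) (hy t ht)
      (by simpa only [one_mul] using hu t ht) (by simpa only [one_mul] using hv t ht)
  have hcoeff : ContinuousOn (fun t => 1 - u t ^ 2 - v t ^ 2) I :=
    (continuousOn_const.sub ((HasDerivAt.continuousOn hu).pow 2)).sub
      ((HasDerivAt.continuousOn hv).pow 2)
  have hWc : ContinuousOn (fun t => v t * x t - u t * y t) I := HasDerivAt.continuousOn hW
  have hzero : ∀ t₁ ∈ I, v t₁ * x t₁ - u t₁ * y t₁ = 0 → ∀ t ∈ I, v t * x t - u t * y t = 0 :=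
    fun t₁ ht₁ h₁ => hI.eqOn_zero_of_hasDerivAt_smul hcoeff hW ht₁ h₁
  have hne : ∀ t₁ ∈ I, v t₁ * x t₁ - u t₁ * y t₁ ≠ 0 → ∀ t ∈ I, v t * x t - u t * y t ≠ 0 :=
    fun t₁ ht₁ h₁ t ht h => h₁ (hzero t ht h t₁ ht₁)
  refine ⟨hW, fun t₁ ht₁ => ⟨hzero t₁ ht₁, fun hpos t ht => ?_, fun hneg t ht => ?_⟩⟩
  · exact hI.isPreconnected.const_lt_of_forall_ne (f := fun t => v t * x t - u t * y t) hWc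
      (hne t₁ ht₁ hpos.ne') ht₁ ht hpos
  · exact hI.isPreconnected.lt_const_of_forall_ne (f := fun t => v t * x t - u t * y t) hWc
      (hne t₁ ht₁ hneg.ne) ht₁ ht hneg
end

section
/- Properties of the Lyapunov function L on Ω. For every (u, v, x, y) ∈ Ω (so in particular x² + y² > 0 and u² + v² > 0): (i) L ≥ (x² + y² − log(x² + y²)) + (u² + v² − log(u² + v²)); (ii) L ≥ 2; and (iii) L = 2 if and only if u² + v² = 1, x² + y² = 1, and v x − u y = ±1. In particular, L → ∞ as x² + y² → ∞ or u² + v² → ∞ within Ω. -/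
private lemma log_le_half (s : ℝ) (hs : 0 < s) : Real.log s ≤ s / 2 := by
  have hr : 0 < Real.sqrt s := Real.sqrt_pos.mpr hs
  have h1 : Real.log (Real.sqrt s) = Real.log s / 2 := Real.log_sqrt hs.le
  have h2 := Real.log_le_sub_one_of_pos hr
  have h3 : Real.sqrt s ^ 2 = s := Real.sq_sqrt hs.le
  nlinarith [Real.sqrt_nonneg s, sq_nonneg (Real.sqrt s - 2)]

private lemma one_le_sub_log (t : ℝ) (ht : 0 < t) : 1 ≤ t - Real.log t := by
  have := Real.log_le_sub_one_of_pos ht; linarith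

private lemma eq_one_of_sub_log (t : ℝ) (ht : 0 < t) (h : t - Real.log t = 1) : t = 1 := by
  by_contra hne
  have := Real.log_lt_sub_one_of_pos ht hne
  linarith

private lemma s_pos (u v x y : ℝ) (h : v * x ≠ u * y) : 0 < x ^ 2 + y ^ 2 := by
  rcases lt_or_eq_of_le (by positivity : (0:ℝ) ≤ x ^ 2 + y ^ 2) with h' | h'
  · exact h'
  · exfalso
    have hx : x = 0 := by nlinarith
    have hy : y = 0 := by nlinarith
    apply h; rw [hx, hy]; ring

private lemma main_bound (u v x y : ℝ) (h : v * x ≠ u * y) :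
    (x ^ 2 + y ^ 2 - Real.log (x ^ 2 + y ^ 2)) +
      (u ^ 2 + v ^ 2 - Real.log (u ^ 2 + v ^ 2)) ≤
    x ^ 2 + y ^ 2 + u ^ 2 + v ^ 2 - Real.log ((v * x - u * y) ^ 2) := by
  have hs : 0 < x ^ 2 + y ^ 2 := s_pos u v x y h
  have ht : 0 < u ^ 2 + v ^ 2 := by
    rcases lt_or_eq_of_le (by positivity : (0:ℝ) ≤ u ^ 2 + v ^ 2) with h' | h'
    · exact h'
    · exfalso
      have hu : u = 0 := by nlinarith
      have hv : v = 0 := by nlinarith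
      apply h; rw [hu, hv]; ring
  have hd0 : v * x - u * y ≠ 0 := sub_ne_zero.mpr h
  have hd : 0 < (v * x - u * y) ^ 2 := by positivity
  have hCS : (v * x - u * y) ^ 2 ≤ (x ^ 2 + y ^ 2) * (u ^ 2 + v ^ 2) := by
    nlinarith [sq_nonneg (u * x + v * y)]
  have hlog : Real.log ((v * x - u * y) ^ 2) ≤
      Real.log (x ^ 2 + y ^ 2) + Real.log (u ^ 2 + v ^ 2) := by
    rw [← Real.log_mul hs.ne' ht.ne']
    exact Real.log_le_log hd hCS
  linarith

/-- Properties of the Lyapunov function `L = x² + y² + u² + v² - log((vx - uy)²)` on the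
region `Ω = {vx ≠ uy}`: the lower bound (i), the minimum value `2` (ii), the description of
the minimum set (iii), and radial unboundedness. -/
theorem L_properties :
    (∀ u v x y : ℝ, v * x ≠ u * y →
      ((x ^ 2 + y ^ 2 - Real.log (x ^ 2 + y ^ 2)) +
          (u ^ 2 + v ^ 2 - Real.log (u ^ 2 + v ^ 2)) ≤
        x ^ 2 + y ^ 2 + u ^ 2 + v ^ 2 - Real.log ((v * x - u * y) ^ 2)) ∧
      (2 ≤ x ^ 2 + y ^ 2 + u ^ 2 + v ^ 2 - Real.log ((v * x - u * y) ^ 2)) ∧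
      (x ^ 2 + y ^ 2 + u ^ 2 + v ^ 2 - Real.log ((v * x - u * y) ^ 2) = 2 ↔
        u ^ 2 + v ^ 2 = 1 ∧ x ^ 2 + y ^ 2 = 1 ∧
          (v * x - u * y = 1 ∨ v * x - u * y = -1))) ∧
    (∀ M : ℝ, ∃ K : ℝ, ∀ u v x y : ℝ, v * x ≠ u * y →
      (K ≤ x ^ 2 + y ^ 2 ∨ K ≤ u ^ 2 + v ^ 2) →
      M ≤ x ^ 2 + y ^ 2 + u ^ 2 + v ^ 2 - Real.log ((v * x - u * y) ^ 2)) := by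
  constructor
  · intro u v x y h
    have hs : 0 < x ^ 2 + y ^ 2 := s_pos u v x y h
    have ht : 0 < u ^ 2 + v ^ 2 := by
      rcases lt_or_eq_of_le (by positivity : (0:ℝ) ≤ u ^ 2 + v ^ 2) with h' | h'
      · exact h'
      · exfalso
        have hu : u = 0 := by nlinarith
        have hv : v = 0 := by nlinarith
        apply h; rw [hu, hv]; ring
    have hmain := main_bound u v x y h
    have hA := one_le_sub_log _ hs
    have hB := one_le_sub_log _ ht
    refine ⟨hmain, by linarith, ?_⟩
    constructor
    · intro heq
      have hA1 : x ^ 2 + y ^ 2 - Real.log (x ^ 2 + y ^ 2) = 1 := by linarith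
      have hB1 : u ^ 2 + v ^ 2 - Real.log (u ^ 2 + v ^ 2) = 1 := by linarith
      have hs1 : x ^ 2 + y ^ 2 = 1 := eq_one_of_sub_log _ hs hA1
      have ht1 : u ^ 2 + v ^ 2 = 1 := eq_one_of_sub_log _ ht hB1
      have hlogd : Real.log ((v * x - u * y) ^ 2) = 0 := by linarith
      have hd0 : v * x - u * y ≠ 0 := sub_ne_zero.mpr h
      have hd1 : (v * x - u * y) ^ 2 = 1 := by
        rcases Real.log_eq_zero.mp hlogd with hc | hc | hc
        · exact absurd hc (by positivity)
        · exact hc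
        · exfalso; nlinarith [sq_nonneg (v * x - u * y)]
      refine ⟨ht1, hs1, ?_⟩
      have h2' : (v * x - u * y) * (v * x - u * y) = 1 := by rw [← sq]; exact hd1
      exact mul_self_eq_one_iff.mp h2'
    · rintro ⟨h1, h2, h3⟩
      have hd1 : (v * x - u * y) ^ 2 = 1 := by
        rcases h3 with h3 | h3 <;> rw [h3] <;> norm_num
      rw [hd1, Real.log_one]; linarith
  · intro M
    refine ⟨2 * M, fun u v x y h hK => ?_⟩
    have hs : 0 < x ^ 2 + y ^ 2 := s_pos u v x y h
    have ht : 0 < u ^ 2 + v ^ 2 := by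
      rcases lt_or_eq_of_le (by positivity : (0:ℝ) ≤ u ^ 2 + v ^ 2) with h' | h'
      · exact h'
      · exfalso
        have hu : u = 0 := by nlinarith
        have hv : v = 0 := by nlinarith
        apply h; rw [hu, hv]; ring
    have hmain := main_bound u v x y h
    have hA := one_le_sub_log _ hs
    have hB := one_le_sub_log _ ht
    have hA2 := log_le_half _ hs
    have hB2 := log_le_half _ ht
    rcases hK with hK | hK
    · linarith
    · linarith
end

section
/- Characterization of equilibrium points of the rotating-frame system. Fix n ≥ 1 and consider, for (X_k, Y_k, Ẋ_k, Ẏ_k)_{k=1,…,n} ∈ ℝ^{4n}, the rotating-frame system Ẍ_k = 2 Ẏ_k + (1 − (Ẋ_k − Y_k)² − (X_k + Ẏ_k)²)(Ẋ_k − Y_k) + X̄ and Ÿ_k = −2 Ẋ_k + (1 − (Ẋ_k − Y_k)² − (X_k + Ẏ_k)²)(X_k + Ẏ_k) + Ȳ, where X̄ = (X_1 + ⋯ + X_n)/n and Ȳ = (Y_1 + ⋯ + Y_n)/n, viewed as a first-order system in the 4n variables (X_k, Y_k, Ẋ_k, Ẏ_k). A point is an equilibrium of this system if and only if: (i) Ẋ_k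 = 0 and Ẏ_k = 0 for all k; (ii) X̄ = 0 and Ȳ = 0; and (iii) for each k, either X_k = Y_k = 0 or X_k² + Y_k² = 1 (that is, X_k = cos δ_k and Y_k = sin δ_k for some δ_k ∈ ℝ). -/
open scoped BigOperators

/-- Characterization of the equilibrium points of the rotating-frame system
`Ẍₖ = 2Ẏₖ + (1 - (Ẋₖ-Yₖ)² - (Xₖ+Ẏₖ)²)(Ẋₖ-Yₖ) + X̄`,
`Ÿₖ = -2Ẋₖ + (1 - (Ẋₖ-Yₖ)² - (Xₖ+Ẏₖ)²)(Xₖ+Ẏₖ) + Ȳ`,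
viewed as a first-order system in the variables `(Xₖ, Yₖ, Ẋₖ, Ẏₖ)`. -/
theorem rotating_frame_equilibria (n : ℕ) (hn : 1 ≤ n)
    (X Y X' Y' : Fin n → ℝ) :
    ((∀ k, X' k = 0) ∧ (∀ k, Y' k = 0) ∧
      (∀ k,
        2 * Y' k + (1 - (X' k - Y k) ^ 2 - (X k + Y' k) ^ 2) * (X' k - Y k) +
            (∑ j, X j) / n = 0 ∧
        -2 * X' k + (1 - (X' k - Y k) ^ 2 - (X k + Y' k) ^ 2) * (X k + Y' k) +
            (∑ j, Y j) / n = 0)) ↔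
    ((∀ k, X' k = 0 ∧ Y' k = 0) ∧
      (∑ j, X j) / n = 0 ∧ (∑ j, Y j) / n = 0 ∧
      (∀ k, (X k = 0 ∧ Y k = 0) ∨ X k ^ 2 + Y k ^ 2 = 1)) := by
  constructor
  · rintro ⟨hX', hY', heq⟩
    set c := (∑ j, X j) / n with hcdef
    set d := (∑ j, Y j) / n with hddef
    have hc : ∀ k, c = (1 - Y k ^ 2 - X k ^ 2) * Y k := by
      intro k
      have h := (heq k).1
      rw [hX' k, hY' k] at h
      nlinarith [h]
    have hd : ∀ k, d = -((1 - Y k ^ 2 - X k ^ 2) * X k) := by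
      intro k
      have h := (heq k).2
      rw [hX' k, hY' k] at h
      nlinarith [h]
    have hn0 : (0:ℝ) < n := by exact_mod_cast hn
    have hsum : (n : ℝ) * (c ^ 2 + d ^ 2) = 0 := by
      have h1 : ∑ k, (c * X k + d * Y k) = 0 :=
        Finset.sum_eq_zero (fun k _ => by rw [hc k, hd k]; ring)
      have hXs : ∑ j, X j = n * c := by rw [hcdef]; field_simp
      have hYs : ∑ j, Y j = n * d := by rw [hddef]; field_simp
      calc (n:ℝ) * (c^2 + d^2) = c * ((n:ℝ)*c) + d * ((n:ℝ)*d) := by ring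
        _ = c * (∑ j, X j) + d * (∑ j, Y j) := by rw [hXs, hYs]
        _ = ∑ k, (c * X k + d * Y k) := by
            rw [Finset.mul_sum, Finset.mul_sum, ← Finset.sum_add_distrib]
        _ = 0 := h1
    have hcd : c ^ 2 + d ^ 2 = 0 := by
      rcases mul_eq_zero.mp hsum with h | h
      · exact absurd h hn0.ne'
      · exact h
    have hc0 : c = 0 := by nlinarith [sq_nonneg c, sq_nonneg d]
    have hd0 : d = 0 := by nlinarith [sq_nonneg c, sq_nonneg d]
    refine ⟨fun k => ⟨hX' k, hY' k⟩, hc0, hd0, ?_⟩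
    intro k
    have h1 := hc k; have h2 := hd k
    rw [hc0] at h1; rw [hd0] at h2
    have hax : (1 - Y k ^ 2 - X k ^ 2) * X k = 0 := by linarith
    have hay : (1 - Y k ^ 2 - X k ^ 2) * Y k = 0 := by linarith
    rcases mul_eq_zero.mp hax with h | hx
    · right; linarith
    · rcases mul_eq_zero.mp hay with h | hy
      · right; linarith
      · left; exact ⟨hx, hy⟩
  · rintro ⟨hXY', hcX, hcY, hcases⟩
    refine ⟨fun k => (hXY' k).1, fun k => (hXY' k).2, fun k => ?_⟩
    rw [(hXY' k).1, (hXY' k).2, hcX, hcY]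
    rcases hcases k with ⟨hx, hy⟩ | h
    · rw [hx, hy]; norm_num
    · constructor
      · linear_combination (Y k) * h
      · linear_combination -(X k) * h
end

section
/- Kernels of the coupling matrices in the non-degenerate case. Let n ≥ 3 and let θ_{0,1}, …, θ_{0,n} ∈ ℝ satisfy ∑_{k=1}^n cos θ_{0,k} = 0, ∑_{k=1}^n sin θ_{0,k} = 0, and ∑_{k=1}^n cos θ_{0,k} sin θ_{0,k} = 0. Let c̄ = (cos θ_{0,1}, …, cos θ_{0,n})ᵀ and s̄ = (sin θ_{0,1}, …, sin θ_{0,n})ᵀ, and assume c̄ and s̄ are linearly independent in ℝⁿ (the non-degenerate case). Define the n × n matrices S = ( (1/n) sin(θ_{0,m} − θ_{0,k}) )_{k,m} and C = ( (1/n) cos(θ_{0,m} − θ_{0,k}) )_{k,m}. Then for every x ∈ ℝⁿ: S x = 0 ⟺ C x = 0 ⟺ (c̄ · x = 0 and s̄ · x = 0). In particular ker S = ker C = {c̄, s̄}^⊥, a linear subspace of ℝⁿ of dimension n − 2. -/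
open scoped BigOperators

/-- Kernels of the coupling matrices `S = ((1/n) sin(θₘ - θₖ))` and
`C = ((1/n) cos(θₘ - θₖ))` in the non-degenerate case: they coincide with the orthogonal
complement of the span of the trigonometric vectors `c̄, s̄`, and have dimension `n - 2`. -/
theorem coupling_matrix_kernels (n : ℕ) (hn : 3 ≤ n) (θ : Fin n → ℝ)
    (h1 : ∑ k, Real.cos (θ k) = 0)
    (h2 : ∑ k, Real.sin (θ k) = 0)
    (h3 : ∑ k, Real.cos (θ k) * Real.sin (θ k) = 0)
    (hindep : LinearIndependent ℝ
      ![(fun k => Real.cos (θ k) : Fin n → ℝ), (fun k => Real.sin (θ k) : Fin n → ℝ)]) :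
    (∀ x : Fin n → ℝ,
      ((Matrix.of fun k m => Real.sin (θ m - θ k) / n).mulVec x = 0 ↔
        (Matrix.of fun k m => Real.cos (θ m - θ k) / n).mulVec x = 0) ∧
      ((Matrix.of fun k m => Real.cos (θ m - θ k) / n).mulVec x = 0 ↔
        ((∑ k, Real.cos (θ k) * x k) = 0 ∧ (∑ k, Real.sin (θ k) * x k) = 0))) ∧
    Module.finrank ℝ
        (LinearMap.ker (Matrix.mulVecLin (Matrix.of fun k m => Real.cos (θ m - θ k) / n))) =
      n - 2 := by
  have hn0 : (n : ℝ) ≠ 0 := Nat.cast_ne_zero.mpr (by omega)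
  set c : Fin n → ℝ := fun k => Real.cos (θ k) with hc
  set s : Fin n → ℝ := fun k => Real.sin (θ k) with hs
  have key : ∀ a b : ℝ, (∀ k, a * c k + b * s k = 0) → a = 0 ∧ b = 0 := by
    intro a b hab
    have := Fintype.linearIndependent_iff.mp hindep ![a, b] ?_
    · exact ⟨this 0, this 1⟩
    · funext k
      simpa [Fin.sum_univ_two] using hab k
  -- pointwise formulas
  have hCx : ∀ x : Fin n → ℝ, ∀ k,
      (Matrix.of fun k m => Real.cos (θ m - θ k) / n).mulVec x k =
        ((∑ m, c m * x m) * c k + (∑ m, s m * x m) * s k) / n := by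
    intro x k
    simp only [Matrix.mulVec, dotProduct, Matrix.of_apply]
    conv_rhs => rw [Finset.sum_mul, Finset.sum_mul, ← Finset.sum_add_distrib, Finset.sum_div]
    refine Finset.sum_congr rfl fun m _ => ?_
    rw [Real.cos_sub]
    simp only [hc, hs]
    ring
  have hSx : ∀ x : Fin n → ℝ, ∀ k,
      (Matrix.of fun k m => Real.sin (θ m - θ k) / n).mulVec x k =
        ((∑ m, s m * x m) * c k - (∑ m, c m * x m) * s k) / n := by
    intro x k
    simp only [Matrix.mulVec, dotProduct, Matrix.of_apply]
    conv_rhs => rw [Finset.sum_mul, Finset.sum_mul, ← Finset.sum_sub_distrib, Finset.sum_div]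
    refine Finset.sum_congr rfl fun m _ => ?_
    rw [Real.sin_sub]
    simp only [hc, hs]
    ring
  have hCiff : ∀ x : Fin n → ℝ,
      (Matrix.of fun k m => Real.cos (θ m - θ k) / n).mulVec x = 0 ↔
        ((∑ k, c k * x k) = 0 ∧ (∑ k, s k * x k) = 0) := by
    intro x
    constructor
    · intro h
      refine key _ _ fun k => ?_
      have := congrFun h k
      rw [hCx x k] at this
      simpa [div_eq_zero_iff, hn0] using this
    · rintro ⟨hA, hB⟩
      funext k
      rw [hCx x k, hA, hB]
      simp
  have hSiff : ∀ x : Fin n → ℝ,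
      (Matrix.of fun k m => Real.sin (θ m - θ k) / n).mulVec x = 0 ↔
        ((∑ k, c k * x k) = 0 ∧ (∑ k, s k * x k) = 0) := by
    intro x
    constructor
    · intro h
      have h' : ∀ k, (∑ m, s m * x m) * c k - (∑ m, c m * x m) * s k = 0 := by
        intro k
        have := congrFun h k
        rw [hSx x k] at this
        simpa [div_eq_zero_iff, hn0] using this
      obtain ⟨hB, hA⟩ := key (∑ m, s m * x m) (-(∑ m, c m * x m)) (fun k => by
        have := h' k; ring_nf; ring_nf at this; linarith)
      exact ⟨by linarith, hB⟩
    · rintro ⟨hA, hB⟩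
      funext k
      rw [hSx x k, hA, hB]
      simp
  refine ⟨fun x => ⟨(hSiff x).trans (hCiff x).symm, hCiff x⟩, ?_⟩
  -- finrank part
  set M : Matrix (Fin 2) (Fin n) ℝ := Matrix.of ![c, s] with hM
  have hker : LinearMap.ker (Matrix.mulVecLin (Matrix.of fun k m => Real.cos (θ m - θ k) / n)) =
      LinearMap.ker M.mulVecLin := by
    ext x
    rw [LinearMap.mem_ker, LinearMap.mem_ker, Matrix.mulVecLin_apply, Matrix.mulVecLin_apply,
      hCiff x]
    constructor
    · rintro ⟨hA, hB⟩
      funext i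
      fin_cases i <;>
        simpa [hM, Matrix.mulVec, dotProduct] using (by assumption)
    · intro h
      constructor
      · simpa [hM, Matrix.mulVec, dotProduct] using congrFun h 0
      · simpa [hM, Matrix.mulVec, dotProduct] using congrFun h 1
  rw [hker]
  have hrank : M.rank = 2 := by
    have : LinearIndependent ℝ M := hindep
    simpa using this.rank_matrix
  have := LinearMap.finrank_range_add_finrank_ker M.mulVecLin
  rw [Module.finrank_pi] at this
  rw [Matrix.rank] at hrank
  rw [Fintype.card_fin] at this
  omega
end

section
/- Characteristic polynomial of the stable–block Jacobian J₁. For every integer m ≥ 1, let J₁ be the 4m × 4m real block matrix with m × m blocks J₁ = [[0, 0, I, 0], [0, 0, 0, I], [0, 0, 0, 2I], [−2I, 0, −2I, −2I]], where I is the m × m identity matrix and 0 the m × m zero matrix. Then det(J₁ − λ I_{4m}) = λ^m (λ³ + 2λ² + 4λ + 4)^m as polynomials in λ. (In the paper this is applied with m = n − 2, giving the restriction of the Jacobian of the ring-state system to the subspace L₁.) -/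
open Polynomial

open scoped Kronecker

namespace Matrix

variable {R n m : Type*} [CommRing R] [DecidableEq n] [DecidableEq m]

theorem map_C_kronecker_one_sub_X_smul (A : Matrix n n R) :
    (A ⊗ₖ (1 : Matrix m m R)).map C - (X : R[X]) • 1 =
      (A.map C - (X : R[X]) • 1) ⊗ₖ (1 : Matrix m m R[X]) := by
  ext ⟨i, k⟩ ⟨j, l⟩
  by_cases hkl : k = l <;> simp [one_apply, hkl]

theorem det_map_C_kronecker_one_sub_X_smul [Fintype n] [Fintype m] (A : Matrix n n R) :
    det ((A ⊗ₖ (1 : Matrix m m R)).map C - (X : R[X]) • 1) =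
      det (A.map C - (X : R[X]) • 1) ^ Fintype.card m := by
  rw [map_C_kronecker_one_sub_X_smul, det_kronecker, det_one, one_pow, mul_one]

end Matrix

theorem det_J1_coeff_map_C_sub_X_smul :
    Matrix.det ((!![0, 0, 1, 0; 0, 0, 0, 1; 0, 0, 0, 2; -2, 0, -2, -2] :
        Matrix (Fin 4) (Fin 4) ℝ).map C - (X : ℝ[X]) • 1) =
      X * (X ^ 3 + 2 * X ^ 2 + 4 * X + 4) := by
  have hM : (!![0, 0, 1, 0; 0, 0, 0, 1; 0, 0, 0, 2; -2, 0, -2, -2] :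
        Matrix (Fin 4) (Fin 4) ℝ).map C - (X : ℝ[X]) • 1 =
      !![-X, 0, 1, 0; 0, -X, 0, 1; 0, 0, -X, 2; -2, 0, -2, -2 - X] := by
    ext i j
    fin_cases i <;> fin_cases j <;> simp [C_ofNat]
  rw [hM, Matrix.det_succ_row_zero, Fin.sum_univ_four]
  simp only [Matrix.det_fin_three, Matrix.submatrix_apply, Matrix.of_apply, Matrix.cons_val',
    Matrix.cons_val, Matrix.cons_val_fin_one, Fin.succAbove, Fin.reduceSucc, Fin.reduceCastSucc,
    Fin.reduceLT, ite_true, ite_false, Fin.val_zero, Fin.val_one, Fin.val_two]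
  ring

theorem J1_charpoly_general (m : ℕ) :
    Matrix.det
        ((Matrix.kroneckerMap (· * ·)
            (!![0, 0, 1, 0; 0, 0, 0, 1; 0, 0, 0, 2; -2, 0, -2, -2] :
              Matrix (Fin 4) (Fin 4) ℝ)
            (1 : Matrix (Fin m) (Fin m) ℝ)).map Polynomial.C -
          (Polynomial.X : ℝ[X]) • 1) =
      Polynomial.X ^ m *
        (Polynomial.X ^ 3 + 2 * Polynomial.X ^ 2 + 4 * Polynomial.X + 4) ^ m := by
  rw [Matrix.det_map_C_kronecker_one_sub_X_smul, det_J1_coeff_map_C_sub_X_smul, mul_pow,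
    Fintype.card_fin]

/-- Characteristic polynomial of the stable-block Jacobian `J₁`: the `4m × 4m` block matrix
with `m × m` blocks `[[0,0,I,0],[0,0,0,I],[0,0,0,2I],[-2I,0,-2I,-2I]]` (realized as the
Kronecker product of the `4 × 4` coefficient matrix with the `m × m` identity) satisfies
`det(J₁ - λ I) = λ^m (λ³ + 2λ² + 4λ + 4)^m`. -/
theorem J1_charpoly (m : ℕ) (hm : 1 ≤ m) :
    Matrix.det
        ((Matrix.kroneckerMap (· * ·)
            (!![0, 0, 1, 0; 0, 0, 0, 1; 0, 0, 0, 2; -2, 0, -2, -2] :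
              Matrix (Fin 4) (Fin 4) ℝ)
            (1 : Matrix (Fin m) (Fin m) ℝ)).map Polynomial.C -
          (Polynomial.X : ℝ[X]) • 1) =
      Polynomial.X ^ m *
        (Polynomial.X ^ 3 + 2 * Polynomial.X ^ 2 + 4 * Polynomial.X + 4) ^ m :=
  J1_charpoly_general m
end

section
/- Routh–Hurwitz stability of the family f_ω. For every ω ∈ (−1/2, 1/2), every complex root λ of the polynomial f_ω(λ) = λ⁶ + 4λ⁵ + 9λ⁴ + 14λ³ + 12λ² + 4λ + (1 − 4ω²) satisfies Re λ < 0. -/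
set_option maxHeartbeats 2000000 in
/-- Routh–Hurwitz stability of the family `f_ω`: for `ω ∈ (-1/2, 1/2)`, every complex root of
`λ⁶ + 4λ⁵ + 9λ⁴ + 14λ³ + 12λ² + 4λ + (1 − 4ω²)` has negative real part. -/
theorem routh_hurwitz_f_omega (ω : ℝ) (hω : ω ∈ Set.Ioo (-(1/2) : ℝ) (1/2)) (lam : ℂ)
    (h : lam ^ 6 + 4 * lam ^ 5 + 9 * lam ^ 4 + 14 * lam ^ 3 + 12 * lam ^ 2 + 4 * lam +
        ((1 - 4 * ω ^ 2 : ℝ) : ℂ) = 0) :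
    lam.re < 0 := by
  obtain ⟨hω1, hω2⟩ := hω
  set c : ℝ := 1 - 4 * ω ^ 2 with hcdef
  have hc0 : 0 < c := by nlinarith
  have hc1 : c ≤ 1 := by nlinarith
  set x := lam.re with hx
  set y := lam.im with hy
  by_contra hneg
  push_neg at hneg
  have hxn : (0:ℝ) ≤ x := hneg
  have hlam : lam = (x : ℂ) + (y : ℂ) * Complex.I := (Complex.re_add_im lam).symm
  rw [hlam] at h
  have hre := congrArg Complex.re h
  have him := congrArg Complex.im h
  simp only [Complex.add_re, Complex.add_im, Complex.mul_re, Complex.mul_im,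
    Complex.ofReal_re, Complex.ofReal_im, Complex.I_re, Complex.I_im,
    Complex.re_ofNat, Complex.im_ofNat, Complex.zero_re, Complex.zero_im,
    pow_succ, pow_zero, one_mul] at hre him
  -- canonical real/imaginary part equations
  have hRE : c + 4*x + 12*x^2 + 14*x^3 + 9*x^4 + 4*x^5 + x^6
      + (-12 - 42*x - 54*x^2 - 40*x^3 - 15*x^4)*y^2
      + (9 + 20*x + 15*x^2)*y^4 - y^6 = 0 := by linear_combination hre
  have hIMy : y * ((4 + 24*x + 42*x^2 + 36*x^3 + 20*x^4 + 6*x^5)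
      + (-14 - 36*x - 40*x^2 - 20*x^3)*y^2 + (4 + 6*x)*y^4) = 0 := by
    linear_combination him
  rcases eq_or_ne y 0 with hy0 | hy0
  · -- real root: all coefficients positive, impossible for x ≥ 0
    rw [hy0] at hRE
    nlinarith [pow_nonneg hxn 2, pow_nonneg hxn 3, pow_nonneg hxn 4,
      pow_nonneg hxn 5, pow_nonneg hxn 6, hc0, hxn]
  · have hQ : (4 + 24*x + 42*x^2 + 36*x^3 + 20*x^4 + 6*x^5)
        + (-14 - 36*x - 40*x^2 - 20*x^3)*y^2 + (4 + 6*x)*y^4 = 0 :=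
      (mul_eq_zero.mp hIMy).resolve_left hy0
    -- resultant certificate: A·Q + B·(RE) = R(x,c), so R(x,c) = 0
    have key : (-3872 + 1144*c + 64*c^2 - 58080*x + 11352*x*c + 288*x*c^2
        - 401280*x^2 + 51840*x^2*c + 432*x^2*c^2 - 1714240*x^3 + 147520*x^3*c
        + 216*x^3*c^2 - 5123840*x^4 + 286912*x^4*c - 11465728*x^5 + 388672*x^5*c
        - 19991040*x^6 + 361216*x^6*c - 27788416*x^7 + 220160*x^7*c
        - 31138816*x^8 + 79872*x^8*c - 28174336*x^9 + 13312*x^9*c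
        - 20434944*x^10 - 11677696*x^11 - 5095424*x^12 - 1605632*x^13
        - 327680*x^14 - 32768*x^15 : ℝ) = 0 := by
      linear_combination
        ((-968 - 88*c - 10208*x - 524*x*c - 48700*x^2 - 1148*x^2*c - 142396*x^3
          - 1120*x^3*c - 286452*x^4 - 420*x^4*c - 415044*x^5 - 437192*x^6
          - 329328*x^7 - 169344*x^8 - 53760*x^9 - 8064*x^10)
        + (1100 + 16*c + 11108*x + 48*x*c + 49560*x^2 + 36*x^2*c + 129584*x^3
          + 217328*x^4 + 239104*x^5 + 168448*x^6 + 69632*x^7 + 13056*x^8)*y^2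
        + (-132 - 1036*x - 3368*x^2 - 6032*x^3 - 6272*x^4 - 3584*x^5
          - 896*x^6)*y^4) * hQ
        + ((1496 + 64*c + 15304*x + 288*x*c + 70784*x^2 + 432*x^2*c
          + 198648*x^3 + 216*x^3*c + 373656*x^4 + 486640*x^5 + 437152*x^6
          + 260608*x^7 + 93696*x^8 + 15616*x^9)
        + (-528 - 4936*x - 19688*x^2 - 44336*x^3 - 61280*x^4 - 51968*x^5
          - 25088*x^6 - 5376*x^7)*y^2) * hRE
    -- but R(x,c) < 0 for x ≥ 0, 0 < c ≤ 1
    have h1c : (0:ℝ) ≤ 1 - c := by linarith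
    have e1 : (0:ℝ) ≤ (1 - c) * x := mul_nonneg h1c hxn
    have e2 : (0:ℝ) ≤ (1 - c) * x^2 := mul_nonneg h1c (pow_nonneg hxn 2)
    have e3 : (0:ℝ) ≤ (1 - c) * x^3 := mul_nonneg h1c (pow_nonneg hxn 3)
    have e4 : (0:ℝ) ≤ (1 - c) * x^4 := mul_nonneg h1c (pow_nonneg hxn 4)
    have e5 : (0:ℝ) ≤ (1 - c) * x^5 := mul_nonneg h1c (pow_nonneg hxn 5)
    have e6 : (0:ℝ) ≤ (1 - c) * x^6 := mul_nonneg h1c (pow_nonneg hxn 6)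
    have e7 : (0:ℝ) ≤ (1 - c) * x^7 := mul_nonneg h1c (pow_nonneg hxn 7)
    have e8 : (0:ℝ) ≤ (1 - c) * x^8 := mul_nonneg h1c (pow_nonneg hxn 8)
    have e9 : (0:ℝ) ≤ (1 - c) * x^9 := mul_nonneg h1c (pow_nonneg hxn 9)
    have h1c2 : (0:ℝ) ≤ 1 - c^2 := by nlinarith
    have f0 : (0:ℝ) ≤ (1 - c^2) := h1c2
    have f1 : (0:ℝ) ≤ (1 - c^2) * x := mul_nonneg h1c2 hxn
    have f2 : (0:ℝ) ≤ (1 - c^2) * x^2 := mul_nonneg h1c2 (pow_nonneg hxn 2)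
    have f3 : (0:ℝ) ≤ (1 - c^2) * x^3 := mul_nonneg h1c2 (pow_nonneg hxn 3)
    have g2 : (0:ℝ) ≤ x^2 := pow_nonneg hxn 2
    have g3 : (0:ℝ) ≤ x^3 := pow_nonneg hxn 3
    have g4 : (0:ℝ) ≤ x^4 := pow_nonneg hxn 4
    have g5 : (0:ℝ) ≤ x^5 := pow_nonneg hxn 5
    have g6 : (0:ℝ) ≤ x^6 := pow_nonneg hxn 6
    have g7 : (0:ℝ) ≤ x^7 := pow_nonneg hxn 7
    have g8 : (0:ℝ) ≤ x^8 := pow_nonneg hxn 8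
    have g9 : (0:ℝ) ≤ x^9 := pow_nonneg hxn 9
    have g10 : (0:ℝ) ≤ x^10 := pow_nonneg hxn 10
    have g11 : (0:ℝ) ≤ x^11 := pow_nonneg hxn 11
    have g12 : (0:ℝ) ≤ x^12 := pow_nonneg hxn 12
    have g13 : (0:ℝ) ≤ x^13 := pow_nonneg hxn 13
    have g14 : (0:ℝ) ≤ x^14 := pow_nonneg hxn 14
    have g15 : (0:ℝ) ≤ x^15 := pow_nonneg hxn 15
    linarith [key, e1, e2, e3, e4, e5, e6, e7, e8, e9, f0, f1, f2, f3,
      hxn, g2, g3, g4, g5, g6, g7, g8, g9, g10, g11, g12, g13, g14, g15]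
end

section
/- Dispersion comparison near a degenerate configuration (part of Lemma on D_L bounds). Fix an integer N ≥ 1 and set n = 2N. There exists δ > 0 such that for every θ = (θ_1, …, θ_n) ∈ ℝⁿ with |θ_k| < δ for all k and satisfying the constraint ∑_{k=1}^N sin θ_k = ∑_{k=N+1}^{2N} sin θ_k, the following hold, where z = (1/N) ∑_{k=1}^N sin θ_k, D_U = (1/N) ∑_{k=1}^N (sin θ_k − z)², D_L = (1/N) ∑_{k=N+1}^{2N} (sin θ_k − z)², and ℰ = (1/n) ( ∑_{k=1}^N cos θ_k − ∑_{k=N+1}^{2N} cos θ_k ): if ℰ > 0 then D_L ≥ (1/2) D_U, and if ℰ < 0 then D_U ≥ (1/2) D_L. -/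
set_option maxHeartbeats 1000000

open scoped BigOperators

lemma key_ineq (s z : ℝ) (hs : |s| ≤ 1/4) (hz : |z| ≤ 1/4) :
    16/33 * (s - z)^2 ≤ (1 - z*s)/Real.sqrt (1 - z^2) - Real.sqrt (1 - s^2) ∧
    (1 - z*s)/Real.sqrt (1 - z^2) - Real.sqrt (1 - s^2) ≤ 4096/6975 * (s - z)^2 := by
  rw [abs_le] at hs hz
  have hs2 : s^2 ≤ 1/16 := by nlinarith
  have hz2 : z^2 ≤ 1/16 := by nlinarith
  set u := Real.sqrt (1 - s^2) with hu
  set v := Real.sqrt (1 - z^2) with hv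
  have hu2 : u^2 = 1 - s^2 := Real.sq_sqrt (by nlinarith)
  have hv2 : v^2 = 1 - z^2 := Real.sq_sqrt (by nlinarith)
  have hu0 : 0 ≤ u := Real.sqrt_nonneg _
  have hv0 : 0 < v := Real.sqrt_pos.mpr (by nlinarith)
  have hu1 : u ≤ 1 := by nlinarith
  have hv1 : v ≤ 1 := by nlinarith
  have hu15 : 15/16 ≤ u := by nlinarith [mul_nonneg hu0 (by linarith : (0:ℝ) ≤ 1 - u)]
  have hv15 : 15/16 ≤ v := by nlinarith [mul_nonneg hv0.le (by linarith : (0:ℝ) ≤ 1 - v)]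
  have hrw : (1 - z*s)/v - u = (1 - z*s - u*v)/v := by field_simp
  have h1 : (1 - z*s - u*v)*(1 - z*s + u*v) = (s - z)^2 := by
    linear_combination (-(v^2)) * hu2 - (1 - s^2) * hv2
  have hzs1 : z*s ≤ 1/16 := by nlinarith
  have hzs2 : -(1/16) ≤ z*s := by nlinarith
  have huv1 : u*v ≤ 1 := mul_le_one₀ hu1 hv0.le hv1
  have huv2 : (225:ℝ)/256 ≤ u*v := by
    nlinarith [mul_le_mul hu15 hv15 (by norm_num : (0:ℝ) ≤ 15/16) hu0]
  have hD : 0 < 1 - z*s + u*v := by linarith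
  have hDub : 1 - z*s + u*v ≤ 33/16 := by linarith
  have hvDub : v * (1 - z*s + u*v) ≤ 33/16 :=
    le_trans (mul_le_of_le_one_left hD.le hv1) hDub
  have hDlb : (465:ℝ)/256 ≤ 1 - z*s + u*v := by linarith
  have hvDlb : (6975:ℝ)/4096 ≤ v * (1 - z*s + u*v) := by
    nlinarith [mul_le_mul hv15 hDlb (by norm_num : (0:ℝ) ≤ 465/256) hv0.le]
  constructor
  · rw [hrw, le_div_iff₀ hv0]
    nlinarith [h1, hD, sq_nonneg (s - z),
      mul_le_mul_of_nonneg_left hvDub (sq_nonneg (s - z))]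
  · rw [hrw, div_le_iff₀ hv0]
    nlinarith [h1, hD, sq_nonneg (s - z),
      mul_le_mul_of_nonneg_left hvDlb (sq_nonneg (s - z))]

lemma cos_eq_sqrt (x : ℝ) (hx : |x| ≤ 1/4) : Real.cos x = Real.sqrt (1 - Real.sin x ^ 2) := by
  rw [abs_le] at hx
  have hpi : Real.pi > 3 := Real.pi_gt_three
  have hc : 0 ≤ Real.cos x :=
    Real.cos_nonneg_of_mem_Icc ⟨by linarith, by linarith⟩
  have h1 : 1 - Real.sin x ^ 2 = Real.cos x ^ 2 := by
    nlinarith [Real.sin_sq_add_cos_sq x]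
  rw [h1, Real.sqrt_sq hc]

/-- Dispersion comparison near a degenerate configuration: for small angle perturbations
`a` (the first group of `N` particles) and `b` (the second group of `N` particles) with
`∑ sin aₖ = ∑ sin bₖ`, the dispersions `D_U, D_L` and the energy `ℰ` satisfy:
if `ℰ > 0` then `D_L ≥ D_U/2`, and if `ℰ < 0` then `D_U ≥ D_L/2`. -/
theorem dispersion_comparison (N : ℕ) (hN : 1 ≤ N) :
    ∃ δ > 0, ∀ a b : Fin N → ℝ,
      (∀ k, |a k| < δ) → (∀ k, |b k| < δ) →
      (∑ k, Real.sin (a k)) = (∑ k, Real.sin (b k)) →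
      (0 < ((∑ k, Real.cos (a k)) - ∑ k, Real.cos (b k)) / (2 * N) →
        (∑ k, (Real.sin (a k) - (∑ j, Real.sin (a j)) / N) ^ 2) / N / 2 ≤
          (∑ k, (Real.sin (b k) - (∑ j, Real.sin (a j)) / N) ^ 2) / N) ∧
      (((∑ k, Real.cos (a k)) - ∑ k, Real.cos (b k)) / (2 * N) < 0 →
        (∑ k, (Real.sin (b k) - (∑ j, Real.sin (a j)) / N) ^ 2) / N / 2 ≤
          (∑ k, (Real.sin (a k) - (∑ j, Real.sin (a j)) / N) ^ 2) / N) := by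
  refine ⟨1/4, by norm_num, fun a b ha hb hsum => ?_⟩
  have hN0 : (0:ℝ) < N := by exact_mod_cast Nat.lt_of_lt_of_le Nat.zero_lt_one hN
  set S := ∑ j, Real.sin (a j) with hSdef
  set z := S / (N:ℝ) with hzdef
  -- bounds on sines
  have hsa : ∀ k, |Real.sin (a k)| ≤ 1/4 :=
    fun k => Real.abs_sin_le_abs.trans (ha k).le
  have hsb : ∀ k, |Real.sin (b k)| ≤ 1/4 :=
    fun k => Real.abs_sin_le_abs.trans (hb k).le
  have hzabs : |z| ≤ 1/4 := by
    have h1 : |S| ≤ (N:ℝ) * (1/4) := by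
      calc |S| ≤ ∑ j, |Real.sin (a j)| := Finset.abs_sum_le_sum_abs _ _
        _ ≤ ∑ _j : Fin N, (1/4 : ℝ) := Finset.sum_le_sum (fun j _ => hsa j)
        _ = (N:ℝ) * (1/4) := by simp [Finset.sum_const, Finset.card_univ, mul_comm]
    rw [hzdef, abs_div, abs_of_pos hN0, div_le_iff₀ hN0]
    linarith
  set v := Real.sqrt (1 - z^2) with hvdef
  have hz2 : z^2 ≤ 1/16 := by nlinarith [abs_le.1 hzabs]
  have hv2 : v^2 = 1 - z^2 := Real.sq_sqrt (by nlinarith)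
  have hv0 : 0 < v := Real.sqrt_pos.mpr (by nlinarith)
  -- the main per-group estimate
  have main : ∀ c : Fin N → ℝ, (∀ k, |c k| < 1/4) → (∑ k, Real.sin (c k)) = S →
      16/33 * (∑ k, (Real.sin (c k) - z)^2) ≤ (N:ℝ) * v - ∑ k, Real.cos (c k) ∧
      (N:ℝ) * v - ∑ k, Real.cos (c k) ≤ 4096/6975 * (∑ k, (Real.sin (c k) - z)^2) := by
    intro c hc hcsum
    have hsc : ∀ k, |Real.sin (c k)| ≤ 1/4 := fun k => Real.abs_sin_le_abs.trans (hc k).le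
    have e1 : (N:ℝ) * v - ∑ k, Real.cos (c k) =
        ∑ k, ((1 - z * Real.sin (c k))/v - Real.sqrt (1 - Real.sin (c k)^2)) := by
      rw [Finset.sum_sub_distrib]
      have e2 : ∑ k, (1 - z * Real.sin (c k))/v = ((N:ℝ) - z * S)/v := by
        rw [← Finset.sum_div, Finset.sum_sub_distrib, ← Finset.mul_sum, hcsum]
        simp [Finset.sum_const, Finset.card_univ]
      have e3 : ∑ k, Real.sqrt (1 - Real.sin (c k)^2) = ∑ k, Real.cos (c k) :=
        Finset.sum_congr rfl (fun k _ => (cos_eq_sqrt (c k) (hc k).le).symm)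
      rw [e2, e3]
      have hzS : z * S = (N:ℝ) * z^2 := by rw [hzdef]; field_simp
      have : ((N:ℝ) - z * S) = (N:ℝ) * v^2 := by rw [hzS, hv2]; ring
      rw [this]
      field_simp
    constructor
    · rw [e1]
      rw [Finset.mul_sum]
      exact Finset.sum_le_sum (fun k _ => (key_ineq _ _ (hsc k) hzabs).1)
    · rw [e1]
      rw [Finset.mul_sum]
      exact Finset.sum_le_sum (fun k _ => (key_ineq _ _ (hsc k) hzabs).2)
  obtain ⟨ha1, ha2⟩ := main a ha rfl
  obtain ⟨hb1, hb2⟩ := main b hb hsum.symm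
  have hAnn : 0 ≤ ∑ k, (Real.sin (a k) - z)^2 :=
    Finset.sum_nonneg (fun k _ => sq_nonneg _)
  have hBnn : 0 ≤ ∑ k, (Real.sin (b k) - z)^2 :=
    Finset.sum_nonneg (fun k _ => sq_nonneg _)
  constructor
  · intro hE
    have hCab : ∑ k, Real.cos (b k) < ∑ k, Real.cos (a k) := by
      rw [div_pos_iff] at hE
      rcases hE with ⟨h1, _⟩ | ⟨_, h2⟩
      · linarith
      · exfalso; nlinarith
    rw [div_div, div_le_div_iff₀ (by positivity) hN0]
    nlinarith
  · intro hE
    have hCab : ∑ k, Real.cos (a k) < ∑ k, Real.cos (b k) := by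
      rw [div_neg_iff] at hE
      rcases hE with ⟨_, h2⟩ | ⟨h1, _⟩
      · linarith
      · linarith
    rw [div_div, div_le_div_iff₀ (by positivity) hN0]
    nlinarith
end

section
/- Expansion of the energy function in terms of the dispersions. Fix an integer N ≥ 1 and set n = 2N. There exist δ > 0 and K > 0 such that for every θ = (θ_1, …, θ_n) ∈ ℝⁿ with |θ_k| < δ for all k and satisfying the constraint ∑_{k=1}^N sin θ_k = ∑_{k=N+1}^{2N} sin θ_k, one has | ℰ − (D_L − D_U) / (4 (1 − z²)^{3/2}) | ≤ K (D_L + D_U)^{3/2} · max_k |θ_k|, where z = (1/N) ∑_{k=1}^N sin θ_k, D_U = (1/N) ∑_{k=1}^N (sin θ_k − z)², D_L = (1/N) ∑_{k=N+1}^{2N} (sin θ_k − z)², and ℰ = (1/n) ( ∑_{k=1}^N cos θ_k − ∑_{k=N+1}^{2N} cos θ_k ). -/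
/-!
For small angles `cos θ = √(1 - sin² θ)`. Expanding `s ↦ √(1 - s²)` to second order around the
common mean `z` of the sines, with `w = √(1 - z²)`, gives
`√(1 - s²) = w - z (s - z) / w - (s - z)² / (2 w³) + O((|z| + |s - z|) |s - z|³)`.
Summed over one group the linear terms cancel, so `∑ cos θ = N w - N D / (2 w³) + O(M (N D)^{3/2})`.
Both groups have the same `z`, so `N w` cancels in `ℰ` and the quadratic terms leave
`(D_L - D_U) / (4 w³)`.
-/

open Real Finset

lemma abs_sub_le_abs_sq_sub {f p : ℝ} (h : 1 ≤ f + p) : |f - p| ≤ |f ^ 2 - p ^ 2| := by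
  rw [show f ^ 2 - p ^ 2 = (f - p) * (f + p) by ring, abs_mul]
  exact le_mul_of_one_le_right (abs_nonneg _) (h.trans (le_abs_self _))

lemma one_sub_sq_sub_taylor_sq {w z u : ℝ} (hw : w ≠ 0) (hw2 : w ^ 2 = 1 - z ^ 2) :
    (1 - (z + u) ^ 2) - (w - z * u / w - u ^ 2 / (2 * w ^ 3)) ^ 2 =
      -(z * u ^ 3 / w ^ 4 + u ^ 4 / (4 * w ^ 6)) := by
  field_simp
  linear_combination (-16 * u ^ 2 * w ^ 4 - 16 * w ^ 6) * hw2

lemma nine_tenths_le_sqrt_one_sub_sq {x : ℝ} (hx : |x| ≤ 3 / 10) : 9 / 10 ≤ √(1 - x ^ 2) := by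
  apply le_sqrt_of_sq_le
  nlinarith [sq_abs x, abs_nonneg x]

lemma abs_sqrt_one_sub_sq_sub_taylor_le {z u : ℝ} (hz : |z| ≤ 1 / 10) (hzu : |z + u| ≤ 1 / 10) :
    |√(1 - (z + u) ^ 2) - (√(1 - z ^ 2) - z * u / √(1 - z ^ 2) -
        u ^ 2 / (2 * √(1 - z ^ 2) ^ 3))| ≤ (2 * |z| + |u|) * |u| ^ 3 := by
  set w := √(1 - z ^ 2)
  have hu : |u| ≤ 1 / 5 := by
    have := abs_sub (z + u) z
    rw [add_sub_cancel_left] at this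
    linarith
  have hw : 9 / 10 ≤ w := nine_tenths_le_sqrt_one_sub_sq (by linarith)
  have hw0 : 0 < w := by linarith
  have hf : 9 / 10 ≤ √(1 - (z + u) ^ 2) := nine_tenths_le_sqrt_one_sub_sq (by linarith)
  have hw2 : w ^ 2 = 1 - z ^ 2 := sq_sqrt (by nlinarith [sq_abs z, abs_nonneg z])
  have hw4 : 1 / 2 ≤ w ^ 4 := by nlinarith
  have hw6 : 1 / 4 ≤ w ^ 6 := by nlinarith
  have hlin : |z * u / w| ≤ 1 / 40 := by
    rw [abs_div, abs_mul, abs_of_pos hw0, div_le_iff₀ hw0]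
    nlinarith [abs_nonneg z, abs_nonneg u]
  have hquad : u ^ 2 / (2 * w ^ 3) ≤ 1 / 20 := by
    rw [div_le_iff₀ (by positivity)]
    nlinarith [sq_abs u, abs_nonneg u]
  have hsum : 1 ≤ √(1 - (z + u) ^ 2) + (w - z * u / w - u ^ 2 / (2 * w ^ 3)) := by
    linarith [le_abs_self (z * u / w)]
  have hcube : 0 ≤ |u| ^ 3 := by positivity
  calc _ ≤ |√(1 - (z + u) ^ 2) ^ 2 - (w - z * u / w - u ^ 2 / (2 * w ^ 3)) ^ 2| :=
        abs_sub_le_abs_sq_sub hsum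
    _ = |z * u ^ 3 / w ^ 4 + u ^ 4 / (4 * w ^ 6)| := by
        rw [sq_sqrt (by nlinarith [sq_abs (z + u), abs_nonneg (z + u)]),
          one_sub_sq_sub_taylor_sq hw0.ne' hw2, abs_neg]
    _ ≤ |z| * |u| ^ 3 / w ^ 4 + |u| * |u| ^ 3 / (4 * w ^ 6) := by
        refine (abs_add_le _ _).trans_eq ?_
        rw [abs_div, abs_div, abs_mul, abs_pow, abs_of_pos (by positivity : 0 < w ^ 4),
          abs_of_pos (by positivity : 0 < 4 * w ^ 6), abs_pow, ← pow_succ']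
    _ ≤ 2 * |z| * |u| ^ 3 + |u| * |u| ^ 3 := by
        gcongr
        · rw [div_le_iff₀ (by positivity)]
          nlinarith [mul_nonneg (abs_nonneg z) hcube]
        · rw [div_le_iff₀ (by positivity)]
          nlinarith [mul_nonneg (abs_nonneg u) hcube]
    _ = (2 * |z| + |u|) * |u| ^ 3 := by ring

lemma sum_abs_pow_three_le {ι : Type*} [Fintype ι] (u : ι → ℝ) :
    ∑ k, |u k| ^ 3 ≤ √(∑ k, u k ^ 2) * ∑ k, u k ^ 2 := by
  rw [mul_sum]
  refine sum_le_sum fun k _ => ?_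
  have hk : |u k| ≤ √(∑ j, u j ^ 2) := by
    rw [← sqrt_sq_eq_abs]
    exact sqrt_le_sqrt (single_le_sum (fun j _ => sq_nonneg (u j)) (mem_univ k))
  calc |u k| ^ 3 = |u k| * u k ^ 2 := by rw [← sq_abs]; ring
    _ ≤ _ := mul_le_mul_of_nonneg_right hk (sq_nonneg _)

lemma abs_sum_sqrt_one_sub_sq_sub_le {ι : Type*} [Fintype ι] {s : ι → ℝ} {z M : ℝ}
    (hz : |z| ≤ 1 / 10) (hs : ∀ k, |s k| ≤ 1 / 10) (hzM : |z| ≤ M) (hsM : ∀ k, |s k| ≤ M)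
    (hmean : ∑ k, (s k - z) = 0) :
    |∑ k, √(1 - s k ^ 2) - (Fintype.card ι * √(1 - z ^ 2) -
        (∑ k, (s k - z) ^ 2) / (2 * √(1 - z ^ 2) ^ 3))| ≤
      4 * M * (√(∑ k, (s k - z) ^ 2) * ∑ k, (s k - z) ^ 2) := by
  set w := √(1 - z ^ 2)
  -- the first-order terms cancel because the `s k` have mean `z`
  have hsplit : ∑ k, √(1 - s k ^ 2) - (Fintype.card ι * w - (∑ k, (s k - z) ^ 2) / (2 * w ^ 3)) =
      ∑ k, (√(1 - (z + (s k - z)) ^ 2) -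
        (w - z * (s k - z) / w - (s k - z) ^ 2 / (2 * w ^ 3))) := by
    simp only [add_sub_cancel, sum_sub_distrib, sum_const, card_univ, nsmul_eq_mul,
      ← sum_div, ← mul_sum, hmean]
    ring
  rw [hsplit]
  calc _ ≤ ∑ k, |√(1 - (z + (s k - z)) ^ 2) -
        (w - z * (s k - z) / w - (s k - z) ^ 2 / (2 * w ^ 3))| := abs_sum_le_sum_abs _ _
    _ ≤ ∑ k, 4 * M * |s k - z| ^ 3 := by
        refine sum_le_sum fun k _ => (abs_sqrt_one_sub_sq_sub_taylor_le hz ?_).trans ?_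
        · rw [add_sub_cancel]; exact hs k
        · gcongr
          linarith [abs_sub (s k) z, hsM k]
    _ ≤ _ := by
        rw [← mul_sum]
        exact mul_le_mul_of_nonneg_left (sum_abs_pow_three_le _)
          (by linarith [abs_nonneg z])

lemma rpow_three_halves {x : ℝ} (hx : 0 ≤ x) : x ^ ((3 : ℝ) / 2) = √x * x := by
  rw [show (3 : ℝ) / 2 = 1 / 2 + 1 by norm_num, rpow_add_one' hx (by norm_num), sqrt_eq_rpow]

lemma sqrt_mul_add_sqrt_mul_le {a b : ℝ} (ha : 0 ≤ a) (hb : 0 ≤ b) :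
    √a * a + √b * b ≤ √(a + b) * (a + b) := by
  have := sqrt_le_sqrt (le_add_of_nonneg_right hb : a ≤ a + b)
  have := sqrt_le_sqrt (le_add_of_nonneg_left ha : b ≤ a + b)
  nlinarith

lemma abs_energy_sub_le {N w M Ca Cb Sa Sb : ℝ} (hN : 0 < N) (hw : w ≠ 0) (hM : 0 ≤ M)
    (hSa : 0 ≤ Sa) (hSb : 0 ≤ Sb)
    (ha : |Ca - (N * w - Sa / (2 * w ^ 3))| ≤ 4 * M * (√Sa * Sa))
    (hb : |Cb - (N * w - Sb / (2 * w ^ 3))| ≤ 4 * M * (√Sb * Sb)) :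
    |(Ca - Cb) / (2 * N) - (Sb / N - Sa / N) / (4 * w ^ 3)| ≤
      2 * √N * (Sb / N + Sa / N) ^ ((3 : ℝ) / 2) * M := by
  have hrearrange : (Ca - Cb) / (2 * N) - (Sb / N - Sa / N) / (4 * w ^ 3) =
      ((Ca - (N * w - Sa / (2 * w ^ 3))) - (Cb - (N * w - Sb / (2 * w ^ 3)))) / (2 * N) := by
    field_simp
    ring
  have hpow : 2 * √N * (Sb / N + Sa / N) ^ ((3 : ℝ) / 2) * M =
      4 * M * (√(Sa + Sb) * (Sa + Sb)) / (2 * N) := by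
    rw [← add_div, rpow_three_halves (by positivity), sqrt_div' _ hN.le, add_comm Sb]
    field_simp
    ring
  rw [hrearrange, hpow, abs_div, abs_of_pos (by positivity : 0 < 2 * N)]
  gcongr
  calc _ ≤ |Ca - (N * w - Sa / (2 * w ^ 3))| + |Cb - (N * w - Sb / (2 * w ^ 3))| := abs_sub _ _
    _ ≤ 4 * M * (√Sa * Sa + √Sb * Sb) := by linarith
    _ ≤ _ := by gcongr; exact sqrt_mul_add_sqrt_mul_le hSa hSb

lemma abs_sum_div_card_le {ι : Type*} [Fintype ι] [Nonempty ι] {s : ι → ℝ} {c : ℝ}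
    (h : ∀ k, |s k| ≤ c) : |(∑ k, s k) / Fintype.card ι| ≤ c := by
  have hcard : (0 : ℝ) < Fintype.card ι := by exact_mod_cast Fintype.card_pos
  rw [abs_div, abs_of_pos hcard, div_le_iff₀ hcard, mul_comm]
  calc _ ≤ ∑ k, |s k| := abs_sum_le_sum_abs _ _
    _ ≤ _ := by simpa using sum_le_card_nsmul univ (fun k => |s k|) c fun k _ => h k

/-- Expansion of the energy function in terms of the dispersions: with
`z = (1/N) ∑ sin aₖ`, `D_U = (1/N) ∑ (sin aₖ - z)²`, `D_L = (1/N) ∑ (sin bₖ - z)²`, and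
`ℰ = (1/(2N)) (∑ cos aₖ - ∑ cos bₖ)`, one has
`|ℰ - (D_L - D_U)/(4 (1 - z²)^{3/2})| ≤ K (D_L + D_U)^{3/2} · max_k |θ_k|`
(the bound being stated for every upper bound `M` of the perturbation angles). -/
theorem energy_expansion (N : ℕ) (hN : 1 ≤ N) :
    ∃ δ > 0, ∃ K > 0, ∀ a b : Fin N → ℝ, ∀ M : ℝ,
      (∀ k, |a k| < δ) → (∀ k, |b k| < δ) →
      (∀ k, |a k| ≤ M) → (∀ k, |b k| ≤ M) →
      (∑ k, Real.sin (a k)) = (∑ k, Real.sin (b k)) →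
      |((∑ k, Real.cos (a k)) - ∑ k, Real.cos (b k)) / (2 * N) -
          ((∑ k, (Real.sin (b k) - (∑ j, Real.sin (a j)) / N) ^ 2) / N -
              (∑ k, (Real.sin (a k) - (∑ j, Real.sin (a j)) / N) ^ 2) / N) /
            (4 * Real.sqrt (1 - ((∑ j, Real.sin (a j)) / N) ^ 2) ^ 3)| ≤
        K * ((∑ k, (Real.sin (b k) - (∑ j, Real.sin (a j)) / N) ^ 2) / N +
              (∑ k, (Real.sin (a k) - (∑ j, Real.sin (a j)) / N) ^ 2) / N) ^ ((3 : ℝ) / 2) *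
          M := by
  have hN0 : (0 : ℝ) < N := by exact_mod_cast hN
  refine ⟨1 / 10, by norm_num, 2 * √N, by positivity, fun a b M ha hb haM hbM hsum => ?_⟩
  have : Nonempty (Fin N) := ⟨⟨0, hN⟩⟩
  have hsin : ∀ {x c : ℝ}, |x| ≤ c → |sin x| ≤ c := abs_sin_le_abs.trans
  have hcos : ∀ {x : ℝ}, |x| < 1 / 10 → cos x = √(1 - sin x ^ 2) := fun {x} hx =>
    cos_eq_sqrt_one_sub_sin_sq (by linarith [neg_abs_le x, pi_gt_three])
      (by linarith [le_abs_self x, pi_gt_three])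
  set z := (∑ j, sin (a j)) / N
  have hmean_a : ∑ k, (sin (a k) - z) = 0 := by
    rw [sum_sub_distrib, sum_const, card_univ, Fintype.card_fin, nsmul_eq_mul,
      mul_div_cancel₀ _ hN0.ne', sub_self]
  have hmean_b : ∑ k, (sin (b k) - z) = 0 := by
    rwa [sum_sub_distrib, ← hsum, ← sum_sub_distrib]
  have hz : ∀ {c}, (∀ k, |a k| ≤ c) → |z| ≤ c := fun h => by
    simpa using abs_sum_div_card_le fun k => hsin (h k)
  have hz_small : |z| ≤ 1 / 10 := hz fun k => (ha k).le
  have hEa := abs_sum_sqrt_one_sub_sq_sub_le hz_small (fun k => hsin (ha k).le)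
    (hz haM) (fun k => hsin (haM k)) hmean_a
  have hEb := abs_sum_sqrt_one_sub_sq_sub_le hz_small (fun k => hsin (hb k).le)
    (hz haM) (fun k => hsin (hbM k)) hmean_b
  simp only [Fintype.card_fin, ← fun k => hcos (ha k), ← fun k => hcos (hb k)] at hEa hEb
  have hw : √(1 - z ^ 2) ≠ 0 :=
    (lt_of_lt_of_le (by norm_num) (nine_tenths_le_sqrt_one_sub_sq (by linarith))).ne'
  exact abs_energy_sub_le hN0 hw ((abs_nonneg z).trans (hz haM))
    (by positivity) (by positivity) hEa hEb
end

section
/- Exact exponential collapse onto the center manifold in the appendix example. Let (x, y, z) : I → ℝ³ be any solution of the system ẋ = x (y − x sin x), ẏ = −y² (y − z), ż = −z + x (y − x sin x)(sin x + x cos x) + x sin x. Then the function g(t) = z(t) − x(t) sin x(t) satisfies ġ = −g on I, and hence z(t) − x(t) sin x(t) = e^{−(t − t₀)} ( z(t₀) − x(t₀) sin x(t₀) ) for all t, t₀ ∈ I. In particular the surface { (x, y, z) : z = x sin x } is invariant under the flow. -/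
/-! Along the flow, `g = z - x sin x` obeys `ġ = -g` exactly: the `ż` equation is built so that
the chain-rule derivative of `x sin x` cancels and only `-g` is left. Hence `eᵗ g` has zero
derivative on the interval `I`, so it is constant there by the mean value inequality. -/

open Real

theorem HasDerivAt.mul_sin_self {f : ℝ → ℝ} {f' t : ℝ} (hf : HasDerivAt f f' t) :
    HasDerivAt (fun s => f s * Real.sin (f s)) (f' * (Real.sin (f t) + f t * Real.cos (f t))) t :=
  (hf.mul (hf.sin)).congr_deriv (by ring)

namespace Set.OrdConnected

variable {E : Type*} [NormedAddCommGroup E] [NormedSpace ℝ E] {I : Set ℝ}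

theorem eq_of_hasDerivAt_eq_zero (hI : I.OrdConnected) {f : ℝ → E}
    (hf : ∀ t ∈ I, HasDerivAt f 0 t) {t t₀ : ℝ} (ht : t ∈ I) (ht₀ : t₀ ∈ I) : f t = f t₀ := by
  have h := Convex.norm_image_sub_le_of_norm_hasDerivWithin_le
    (fun s hs => (hf s hs).hasDerivWithinAt) (fun _ _ => norm_zero.le) hI.convex ht₀ ht
  rwa [zero_mul, norm_le_zero_iff, sub_eq_zero] at h

theorem eq_exp_mul_smul_of_hasDerivAt (hI : I.OrdConnected) {g : ℝ → E} {a : ℝ}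
    (hg : ∀ t ∈ I, HasDerivAt g (a • g t) t) {t t₀ : ℝ} (ht : t ∈ I) (ht₀ : t₀ ∈ I) :
    g t = exp (a * (t - t₀)) • g t₀ := by
  have hconst : exp (-a * t) • g t = exp (-a * t₀) • g t₀ := by
    refine hI.eq_of_hasDerivAt_eq_zero (f := fun s => exp (-a * s) • g s) (fun s hs => ?_)
      ht ht₀
    have hexp : HasDerivAt (fun s => exp (-a * s)) (exp (-a * s) * -a) s := by
      simpa using ((hasDerivAt_id s).const_mul (-a)).exp
    exact (hexp.smul (hg s hs)).congr_deriv (by module)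
  calc g t = exp (a * t) • exp (-a * t) • g t := by
        rw [smul_smul, ← exp_add, neg_mul, add_neg_cancel, exp_zero, one_smul]
    _ = exp (a * (t - t₀)) • g t₀ := by
        rw [hconst, smul_smul, ← exp_add]
        ring_nf

end Set.OrdConnected

theorem appendix_exponential_collapse_general (I : Set ℝ) (hI : I.OrdConnected) (x y z : ℝ → ℝ)
    (hx : ∀ t ∈ I, HasDerivAt x (x t * (y t - x t * Real.sin (x t))) t)
    (hz : ∀ t ∈ I, HasDerivAt z
      (-(z t) + x t * (y t - x t * Real.sin (x t)) * (Real.sin (x t) + x t * Real.cos (x t)) +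
        x t * Real.sin (x t)) t) :
    (∀ t ∈ I, HasDerivAt (fun s => z s - x s * Real.sin (x s))
        (-(z t - x t * Real.sin (x t))) t) ∧
    (∀ t ∈ I, ∀ t₀ ∈ I,
      z t - x t * Real.sin (x t) =
        Real.exp (-(t - t₀)) * (z t₀ - x t₀ * Real.sin (x t₀))) ∧
    (∀ t₀ ∈ I, z t₀ = x t₀ * Real.sin (x t₀) → ∀ t ∈ I, z t = x t * Real.sin (x t)) := by
  have hg : ∀ t ∈ I, HasDerivAt (fun s => z s - x s * sin (x s)) (-(z t - x t * sin (x t))) t :=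
    fun t ht => ((hz t ht).sub (HasDerivAt.mul_sin_self (hx t ht))).congr_deriv (by ring)
  have hexp : ∀ t ∈ I, ∀ t₀ ∈ I,
      z t - x t * sin (x t) = exp (-(t - t₀)) * (z t₀ - x t₀ * sin (x t₀)) := by
    intro t ht t₀ ht₀
    simpa using hI.eq_exp_mul_smul_of_hasDerivAt (g := fun s => z s - x s * sin (x s)) (a := -1)
      (by simpa using hg) ht ht₀
  refine ⟨hg, hexp, fun t₀ ht₀ h₀ t ht => ?_⟩
  simpa [h₀, sub_eq_zero] using hexp t ht t₀ ht₀

/-- Exact exponential collapse onto the center manifold in the appendix example: along any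
solution of `ẋ = x(y - x sin x)`, `ẏ = -y²(y - z)`,
`ż = -z + x(y - x sin x)(sin x + x cos x) + x sin x`, the function `g = z - x sin x`
satisfies `ġ = -g`, hence `g(t) = e^{-(t-t₀)} g(t₀)`; in particular the surface
`{z = x sin x}` is invariant. -/
theorem appendix_exponential_collapse (I : Set ℝ) (hI : I.OrdConnected) (x y z : ℝ → ℝ)
    (hx : ∀ t ∈ I, HasDerivAt x (x t * (y t - x t * Real.sin (x t))) t)
    (hy : ∀ t ∈ I, HasDerivAt y (-(y t) ^ 2 * (y t - z t)) t)
    (hz : ∀ t ∈ I, HasDerivAt z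
      (-(z t) + x t * (y t - x t * Real.sin (x t)) * (Real.sin (x t) + x t * Real.cos (x t)) +
        x t * Real.sin (x t)) t) :
    (∀ t ∈ I, HasDerivAt (fun s => z s - x s * Real.sin (x s))
        (-(z t - x t * Real.sin (x t))) t) ∧
    (∀ t ∈ I, ∀ t₀ ∈ I,
      z t - x t * Real.sin (x t) =
        Real.exp (-(t - t₀)) * (z t₀ - x t₀ * Real.sin (x t₀))) ∧
    (∀ t₀ ∈ I, z t₀ = x t₀ * Real.sin (x t₀) → ∀ t ∈ I, z t = x t * Real.sin (x t)) :=
  appendix_exponential_collapse_general I hI x y z hx hz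
end

section
/- Dynamics of the reduced appendix example on its center manifold. Consider the planar system ẋ = x (y − x sin x), ẏ = −y² (y − x sin x). Then: (i) the origin is Lyapunov stable: for every ε > 0 there is δ > 0 such that every solution with |(x(0), y(0))| < δ satisfies |(x(t), y(t))| < ε for all t ≥ 0; (ii) the origin is not asymptotically stable: in every neighborhood of (0,0) there are initial conditions whose solutions do not converge to (0,0); and (iii) for every solution starting sufficiently close to the origin, every ω-limit point of the solution is an equilibrium of the form (a, a sin a) for some a ∈ ℝ. -/
/-
The gap `g = y - x sin x` to the curve of equilibria solves a linear equation `ġ = h g`, and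
so does `x` (`ẋ = g x`); by uniqueness neither changes sign, so `x` and `y` (with `ẏ = -y² g`)
are monotone. If `g ≥ 0`, `y` decreases and `x sin x ≤ y` keeps `|x|` below `b ≤ 1` once
`|x 0|, y 0 < b sin b`; if `g ≤ 0`, `x²` decreases and `y` increases while staying below
`x sin x ≤ x²`. This gives stability, and bounded monotone solutions converge. At the limit both
velocities `x g` and `-y² g` must vanish, which forces `g = 0`: the limit is an equilibrium
`(a, a sin a)`. These equilibria accumulate at the origin, so it is not asymptotically stable.
-/

/-- `(x, y)` is a solution on `[0, ∞)` of the reduced appendix system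
`ẋ = x (y - x sin x)`, `ẏ = -y² (y - x sin x)`. -/
def IsReducedSolution (x y : ℝ → ℝ) : Prop :=
  ∀ t : ℝ, 0 ≤ t →
    HasDerivAt x (x t * (y t - x t * Real.sin (x t))) t ∧
    HasDerivAt y (-(y t) ^ 2 * (y t - x t * Real.sin (x t))) t

open Real Filter Set Topology

def HasConstSignOn (f : ℝ → ℝ) (s : Set ℝ) : Prop :=
  (∀ t ∈ s, 0 ≤ f t) ∨ ∀ t ∈ s, f t ≤ 0

theorem HasConstSignOn.mul {f g : ℝ → ℝ} {s : Set ℝ} (hf : HasConstSignOn f s)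
    (hg : HasConstSignOn g s) : HasConstSignOn (fun t ↦ f t * g t) s := by
  rcases hf with hf | hf <;> rcases hg with hg | hg
  · exact .inl fun t ht ↦ mul_nonneg (hf t ht) (hg t ht)
  · exact .inr fun t ht ↦ mul_nonpos_of_nonneg_of_nonpos (hf t ht) (hg t ht)
  · exact .inr fun t ht ↦ mul_nonpos_of_nonpos_of_nonneg (hf t ht) (hg t ht)
  · exact .inl fun t ht ↦ mul_nonneg_of_nonpos_of_nonpos (hf t ht) (hg t ht)

theorem eqOn_zero_of_hasDerivAt_linear {f h : ℝ → ℝ} {a b c : ℝ}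
    (hh : ContinuousOn h (Icc a b)) (hf : ∀ t ∈ Icc a b, HasDerivAt f (h t * f t) t)
    (hc : c ∈ Icc a b) (hfc : f c = 0) : EqOn f 0 (Icc a b) := by
  obtain ⟨C, hC⟩ := isCompact_Icc.exists_bound_of_continuousOn hh
  have hlip : ∀ t ∈ Icc a b, LipschitzOnWith C.toNNReal (h t * ·) univ := fun t ht ↦ by
    have hK : ‖h t‖₊ ≤ C.toNNReal := by
      rw [← NNReal.coe_le_coe, coe_nnnorm]
      exact (hC t ht).trans (le_coe_toNNReal C)
    exact ((lipschitzWith_smul (h t)).weaken hK).lipschitzOnWith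
  have hf_cont : ContinuousOn f (Icc a b) := fun t ht ↦ (hf t ht).continuousAt.continuousWithinAt
  have hzero : ∀ t, HasDerivAt (0 : ℝ → ℝ) (h t * 0) t := fun t ↦
    (hasDerivAt_const t 0).congr_deriv (mul_zero _).symm
  rw [← Icc_union_Icc_eq_Icc hc.1 hc.2]
  refine EqOn.union ?_ ?_
  · exact ODE_solution_unique_of_mem_Icc_left (fun t ht ↦ hlip t ⟨ht.1.le, ht.2.trans hc.2⟩)
      (hf_cont.mono (Icc_subset_Icc_right hc.2))
      (fun t ht ↦ (hf t ⟨ht.1.le, ht.2.trans hc.2⟩).hasDerivWithinAt) (fun _ _ ↦ mem_univ _)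
      continuousOn_const (fun t _ ↦ (hzero t).hasDerivWithinAt) (fun _ _ ↦ mem_univ _) hfc
  · exact ODE_solution_unique_of_mem_Icc_right (fun t ht ↦ hlip t ⟨hc.1.trans ht.1, ht.2.le⟩)
      (hf_cont.mono (Icc_subset_Icc_left hc.1))
      (fun t ht ↦ (hf t ⟨hc.1.trans ht.1, ht.2.le⟩).hasDerivWithinAt) (fun _ _ ↦ mem_univ _)
      continuousOn_const (fun t _ ↦ (hzero t).hasDerivWithinAt) (fun _ _ ↦ mem_univ _) hfc

theorem hasConstSignOn_of_hasDerivAt_linear {f h : ℝ → ℝ} {a : ℝ}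
    (hh : ContinuousOn h (Ici a)) (hf : ∀ t ∈ Ici a, HasDerivAt f (h t * f t) t) :
    HasConstSignOn f (Ici a) := by
  by_contra! hsign
  simp only [HasConstSignOn, not_or, not_forall, not_le] at hsign
  obtain ⟨⟨s, hs, hfs⟩, ⟨u, hu, hfu⟩⟩ := hsign
  have hsub : uIcc s u ⊆ Icc a (max s u) :=
    fun t ht ↦ ⟨le_trans (le_min hs hu) ht.1, ht.2⟩
  have hf_cont : ContinuousOn f (uIcc s u) :=
    fun t ht ↦ (hf t (hsub ht).1).continuousAt.continuousWithinAt
  obtain ⟨c, hc, hfc⟩ := intermediate_value_uIcc hf_cont (mem_uIcc_of_le hfs.le hfu.le)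
  have := eqOn_zero_of_hasDerivAt_linear (hh.mono Icc_subset_Ici_self)
    (fun t ht ↦ hf t ht.1) (hsub hc) hfc ⟨hs, le_max_left s u⟩
  simp only [Pi.zero_apply] at this
  linarith

theorem monotoneOn_Ici_of_hasDerivAt_nonneg {f f' : ℝ → ℝ} {a : ℝ}
    (hf : ∀ t ∈ Ici a, HasDerivAt f (f' t) t) (hf' : ∀ t ∈ Ici a, 0 ≤ f' t) :
    MonotoneOn f (Ici a) :=
  monotoneOn_of_hasDerivWithinAt_nonneg (convex_Ici a)
    (fun t ht ↦ (hf t ht).continuousAt.continuousWithinAt)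
    (fun t ht ↦ (hf t (interior_subset ht)).hasDerivWithinAt)
    (fun t ht ↦ hf' t (interior_subset ht))

theorem antitoneOn_Ici_of_hasDerivAt_nonpos {f f' : ℝ → ℝ} {a : ℝ}
    (hf : ∀ t ∈ Ici a, HasDerivAt f (f' t) t) (hf' : ∀ t ∈ Ici a, f' t ≤ 0) :
    AntitoneOn f (Ici a) :=
  antitoneOn_of_hasDerivWithinAt_nonpos (convex_Ici a)
    (fun t ht ↦ (hf t ht).continuousAt.continuousWithinAt)
    (fun t ht ↦ (hf t (interior_subset ht)).hasDerivWithinAt)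
    (fun t ht ↦ hf' t (interior_subset ht))

theorem MonotoneOn.exists_tendsto_atTop {f : ℝ → ℝ} {a C : ℝ} (hf : MonotoneOn f (Ici a))
    (hC : ∀ t ∈ Ici a, f t ≤ C) : ∃ L, Tendsto f atTop (𝓝 L) := by
  have hmono : Monotone (fun t ↦ f (max t a)) := fun s t hst ↦
    hf (le_max_right s a) (le_max_right t a) (max_le_max_right a hst)
  refine ⟨_, (tendsto_atTop_ciSup hmono ⟨C, ?_⟩).congr' ?_⟩
  · rintro _ ⟨t, rfl⟩
    exact hC _ (le_max_right t a)
  · filter_upwards [eventually_ge_atTop a] with t ht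
    rw [max_eq_left ht]

theorem exists_tendsto_of_hasDerivAt_of_hasConstSignOn {f f' : ℝ → ℝ} {a C : ℝ}
    (hf : ∀ t ∈ Ici a, HasDerivAt f (f' t) t) (hf' : HasConstSignOn f' (Ici a))
    (hC : ∀ t ∈ Ici a, |f t| ≤ C) : ∃ L, Tendsto f atTop (𝓝 L) := by
  rcases hf' with hf' | hf'
  · exact (monotoneOn_Ici_of_hasDerivAt_nonneg hf hf').exists_tendsto_atTop
      fun t ht ↦ (le_abs_self _).trans (hC t ht)
  · obtain ⟨L, hL⟩ := (antitoneOn_Ici_of_hasDerivAt_nonpos hf hf').neg.exists_tendsto_atTop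
      fun t ht ↦ (neg_le_abs _).trans (hC t ht)
    exact ⟨-L, by simpa using hL.neg⟩

theorem eq_zero_of_tendsto_of_tendsto_deriv {f f' : ℝ → ℝ} {a L c : ℝ}
    (hf : ∀ t ∈ Ici a, HasDerivAt f (f' t) t) (hfL : Tendsto f atTop (𝓝 L))
    (hf'c : Tendsto f' atTop (𝓝 c)) : c = 0 := by
  choose! ξ hξ hξf using fun t (ht : t ∈ Ici a) ↦ exists_hasDerivAt_eq_slope f f' (lt_add_one t)
    (fun s hs ↦ (hf s (le_trans ht hs.1)).continuousAt.continuousWithinAt)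
    (fun s hs ↦ hf s (le_trans ht hs.1.le))
  have hξ_top : Tendsto ξ atTop atTop := tendsto_atTop_mono' atTop
    (by filter_upwards [eventually_ge_atTop a] with t ht using (hξ t ht).1.le) tendsto_id
  have hslope : Tendsto (fun t ↦ f (t + 1) - f t) atTop (𝓝 (L - L)) :=
    (hfL.comp (tendsto_atTop_add_const_right _ 1 tendsto_id)).sub hfL
  rw [sub_self] at hslope
  refine tendsto_nhds_unique ((hf'c.comp hξ_top).congr' ?_) hslope
  filter_upwards [eventually_ge_atTop a] with t ht
  simp [hξf t ht]

noncomputable def equilibriumGap (x y : ℝ → ℝ) (t : ℝ) : ℝ := y t - x t * sin (x t)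

theorem mul_sin_eq_abs_mul_sin_abs (u : ℝ) : u * sin u = |u| * sin |u| := by
  rcases abs_choice u with hu | hu <;> rw [hu]
  rw [sin_neg, neg_mul_neg]

theorem mul_sin_nonneg {u : ℝ} (hu : |u| ≤ π) : 0 ≤ u * sin u := by
  rw [mul_sin_eq_abs_mul_sin_abs]
  exact mul_nonneg (abs_nonneg u) (sin_nonneg_of_nonneg_of_le_pi (abs_nonneg u) hu)

theorem mul_sin_le_sq (u : ℝ) : u * sin u ≤ u ^ 2 := by
  rw [mul_sin_eq_abs_mul_sin_abs, ← sq_abs, sq]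
  exact mul_le_mul_of_nonneg_left (sin_le (abs_nonneg u)) (abs_nonneg u)

theorem isReducedSolution_const (a : ℝ) : IsReducedSolution (fun _ ↦ a) (fun _ ↦ a * sin a) :=
  fun t _ ↦ by simpa using ⟨hasDerivAt_const t a, hasDerivAt_const t (a * sin a)⟩

namespace IsReducedSolution

variable {x y : ℝ → ℝ}

theorem continuousOn_left (hs : IsReducedSolution x y) : ContinuousOn x (Ici 0) :=
  fun t ht ↦ (hs t ht).1.continuousAt.continuousWithinAt

theorem continuousOn_right (hs : IsReducedSolution x y) : ContinuousOn y (Ici 0) :=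
  fun t ht ↦ (hs t ht).2.continuousAt.continuousWithinAt

theorem hasDerivAt_equilibriumGap (hs : IsReducedSolution x y) {t : ℝ} (ht : t ∈ Ici 0) :
    HasDerivAt (equilibriumGap x y)
      (-(y t ^ 2 + (sin (x t) + x t * cos (x t)) * x t) * equilibriumGap x y t) t := by
  obtain ⟨hx, hy⟩ := hs t ht
  exact (hy.sub (hx.mul ((hasDerivAt_sin (x t)).comp t hx))).congr_deriv
    (by simp only [equilibriumGap, Function.comp_apply]; ring)

theorem continuousOn_equilibriumGap (hs : IsReducedSolution x y) :
    ContinuousOn (equilibriumGap x y) (Ici 0) := by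
  have hx := hs.continuousOn_left
  have hy := hs.continuousOn_right
  unfold equilibriumGap
  fun_prop

theorem hasConstSignOn_equilibriumGap (hs : IsReducedSolution x y) :
    HasConstSignOn (equilibriumGap x y) (Ici 0) := by
  have hx := hs.continuousOn_left
  have hy := hs.continuousOn_right
  exact hasConstSignOn_of_hasDerivAt_linear (by fun_prop)
    fun t ht ↦ hs.hasDerivAt_equilibriumGap ht

theorem abs_lt_of_equilibriumGap_nonneg (hs : IsReducedSolution x y) {b : ℝ} (hb0 : 0 < b)
    (hb1 : b ≤ 1) (hx0 : |x 0| < b * sin b) (hy0 : |y 0| < b * sin b)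
    (hgap : ∀ t ∈ Ici 0, 0 ≤ equilibriumGap x y t) :
    ∀ t ∈ Ici 0, |x t| < b ∧ |y t| < b := by
  have hbsin : b * sin b ≤ b := mul_le_of_le_one_right hb0.le (sin_le_one b)
  have hy_anti : AntitoneOn y (Ici 0) :=
    antitoneOn_Ici_of_hasDerivAt_nonpos (fun t ht ↦ (hs t ht).2) fun t ht ↦
      mul_nonpos_of_nonpos_of_nonneg (neg_nonpos.2 (sq_nonneg _)) (hgap t ht)
  simp only [equilibriumGap] at hgap
  have hx_lt : ∀ t ∈ Ici 0, |x t| < b := by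
    intro t ht
    by_contra! hbx
    -- at a time where `|x| = b`, the gap is `y s - b sin b ≤ y 0 - b sin b < 0`
    obtain ⟨s, hs_mem, hxs⟩ := intermediate_value_Icc ht
      (hs.continuousOn_left.mono Icc_subset_Ici_self).abs ⟨(hx0.trans_le hbsin).le, hbx⟩
    have hgap_s := hgap s hs_mem.1
    rw [mul_sin_eq_abs_mul_sin_abs, show |x s| = b from hxs] at hgap_s
    linarith [hy_anti self_mem_Ici hs_mem.1 hs_mem.1, le_abs_self (y 0)]
  intro t ht
  have hxsin := mul_sin_nonneg ((hx_lt t ht).le.trans (hb1.trans (by linarith [pi_gt_three])))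
  refine ⟨hx_lt t ht, abs_lt.2 ⟨by linarith [hgap t ht], ?_⟩⟩
  linarith [hy_anti self_mem_Ici ht ht, le_abs_self (y 0)]

theorem abs_lt_of_equilibriumGap_nonpos (hs : IsReducedSolution x y) {b : ℝ} (hb0 : 0 < b)
    (hb1 : b ≤ 1) (hx0 : |x 0| < b * sin b) (hy0 : |y 0| < b * sin b)
    (hgap : ∀ t ∈ Ici 0, equilibriumGap x y t ≤ 0) :
    ∀ t ∈ Ici 0, |x t| < b ∧ |y t| < b := by
  have hbsin : b * sin b ≤ b := mul_le_of_le_one_right hb0.le (sin_le_one b)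
  have hx_sq_anti : AntitoneOn (fun t ↦ x t ^ 2) (Ici 0) :=
    antitoneOn_Ici_of_hasDerivAt_nonpos (f' := fun t ↦ 2 * x t ^ 2 * equilibriumGap x y t)
      (fun t ht ↦ ((hs t ht).1.pow 2).congr_deriv (by simp only [equilibriumGap]; ring))
      fun t ht ↦ mul_nonpos_of_nonneg_of_nonpos (by positivity) (hgap t ht)
  have hy_mono : MonotoneOn y (Ici 0) :=
    monotoneOn_Ici_of_hasDerivAt_nonneg (fun t ht ↦ (hs t ht).2) fun t ht ↦
      mul_nonneg_of_nonpos_of_nonpos (neg_nonpos.2 (sq_nonneg _)) (hgap t ht)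
  simp only [equilibriumGap] at hgap
  intro t ht
  have hx_le : |x t| ≤ |x 0| := sq_le_sq.1 (hx_sq_anti self_mem_Ici ht ht)
  refine ⟨by linarith, abs_lt.2 ⟨?_, ?_⟩⟩
  · linarith [hy_mono self_mem_Ici ht ht, neg_abs_le (y 0)]
  · calc y t ≤ x t * sin (x t) := by linarith [hgap t ht]
      _ ≤ |x t| ^ 2 := (mul_sin_le_sq _).trans_eq (sq_abs _).symm
      _ < (b * sin b) ^ 2 := by gcongr; linarith
      _ ≤ b * sin b :=
        pow_le_of_le_one ((abs_nonneg _).trans hx0.le) (hbsin.trans hb1) two_ne_zero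
      _ ≤ b := hbsin

theorem norm_lt_of_norm_lt_at_zero (hs : IsReducedSolution x y) {b : ℝ} (hb0 : 0 < b)
    (hb1 : b ≤ 1) (h0 : ‖(x 0, y 0)‖ < b * sin b) :
    ∀ t ∈ Ici 0, ‖(x t, y t)‖ < b := by
  simp only [Prod.norm_mk, Real.norm_eq_abs, max_lt_iff] at h0 ⊢
  exact hs.hasConstSignOn_equilibriumGap.elim
    (hs.abs_lt_of_equilibriumGap_nonneg hb0 hb1 h0.1 h0.2)
    (hs.abs_lt_of_equilibriumGap_nonpos hb0 hb1 h0.1 h0.2)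

theorem eq_mul_sin_of_tendsto (hs : IsReducedSolution x y) {a L : ℝ}
    (hx : Tendsto x atTop (𝓝 a)) (hy : Tendsto y atTop (𝓝 L)) : L = a * sin a := by
  have hgap : Tendsto (equilibriumGap x y) atTop (𝓝 (L - a * sin a)) :=
    hy.sub (hx.mul ((continuous_sin.tendsto a).comp hx))
  have hx' : a * (L - a * sin a) = 0 :=
    eq_zero_of_tendsto_of_tendsto_deriv (fun t ht ↦ (hs t ht).1) hx (hx.mul hgap)
  have hy' : -L ^ 2 * (L - a * sin a) = 0 :=
    eq_zero_of_tendsto_of_tendsto_deriv (fun t ht ↦ (hs t ht).2) hy ((hy.pow 2).neg.mul hgap)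
  by_contra hne
  have hgap_ne : L - a * sin a ≠ 0 := sub_ne_zero.2 hne
  have ha : a = 0 := (mul_eq_zero.1 hx').resolve_right hgap_ne
  have hL : L = 0 := by simpa [hgap_ne] using hy'
  exact hne (by simp [ha, hL])

theorem exists_tendsto_of_norm_lt (hs : IsReducedSolution x y) (h0 : ‖(x 0, y 0)‖ < sin 1) :
    ∃ a L, Tendsto x atTop (𝓝 a) ∧ Tendsto y atTop (𝓝 L) := by
  have hbound := hs.norm_lt_of_norm_lt_at_zero one_pos le_rfl (by rwa [one_mul])
  have hgap := hs.hasConstSignOn_equilibriumGap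
  have hx_sign : HasConstSignOn x (Ici 0) :=
    hasConstSignOn_of_hasDerivAt_linear hs.continuousOn_equilibriumGap
      fun t ht ↦ (hs t ht).1.congr_deriv (mul_comm _ _)
  obtain ⟨a, ha⟩ := exists_tendsto_of_hasDerivAt_of_hasConstSignOn (fun t ht ↦ (hs t ht).1)
    (hx_sign.mul hgap) fun t ht ↦ (norm_fst_le (x t, y t)).trans (hbound t ht).le
  have hy_sq_sign : HasConstSignOn (fun t ↦ -y t ^ 2) (Ici 0) :=
    .inr fun t _ ↦ neg_nonpos.2 (sq_nonneg _)
  obtain ⟨L, hL⟩ := exists_tendsto_of_hasDerivAt_of_hasConstSignOn (fun t ht ↦ (hs t ht).2)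
    (hy_sq_sign.mul hgap) fun t ht ↦ (norm_snd_le (x t, y t)).trans (hbound t ht).le
  exact ⟨a, L, ha, hL⟩

end IsReducedSolution

/-- Dynamics of the reduced appendix example on its center manifold:
(i) the origin is Lyapunov stable; (ii) it is not asymptotically stable; (iii) every
ω-limit point of a solution starting near the origin is an equilibrium `(a, a sin a)`. -/
theorem reduced_appendix_dynamics :
    (∀ ε > 0, ∃ δ > 0, ∀ x y : ℝ → ℝ, IsReducedSolution x y →
      ‖(x 0, y 0)‖ < δ → ∀ t : ℝ, 0 ≤ t → ‖(x t, y t)‖ < ε) ∧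
    (∀ δ > 0, ∃ x y : ℝ → ℝ, IsReducedSolution x y ∧ ‖(x 0, y 0)‖ < δ ∧
      ¬ Filter.Tendsto (fun t : ℝ => (x t, y t)) Filter.atTop (nhds ((0 : ℝ), (0 : ℝ)))) ∧
    (∃ δ > 0, ∀ x y : ℝ → ℝ, IsReducedSolution x y → ‖(x 0, y 0)‖ < δ →
      ∀ p : ℝ × ℝ, MapClusterPt p Filter.atTop (fun t : ℝ => (x t, y t)) →
        ∃ a : ℝ, p = (a, a * Real.sin a)) := by
  have hπ : 1 < π := by linarith [pi_gt_three]
  refine ⟨fun ε hε ↦ ?_, fun δ hδ ↦ ?_, ?_⟩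
  · have hb0 : 0 < min ε 1 := lt_min hε one_pos
    refine ⟨min ε 1 * sin (min ε 1),
      mul_pos hb0 (sin_pos_of_pos_of_lt_pi hb0 ((min_le_right ε 1).trans_lt hπ)),
      fun x y hs h0 t ht ↦ ?_⟩
    exact (hs.norm_lt_of_norm_lt_at_zero hb0 (min_le_right ε 1) h0 t ht).trans_le
      (min_le_left ε 1)
  · refine ⟨_, _, isReducedSolution_const (δ / 2), ?_, ?_⟩
    · have hsin : |δ / 2 * sin (δ / 2)| ≤ δ / 2 := by
        rw [abs_mul, abs_of_pos (half_pos hδ)]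
        exact mul_le_of_le_one_right (half_pos hδ).le (abs_sin_le_one _)
      rw [Prod.norm_mk, Real.norm_eq_abs, Real.norm_eq_abs, abs_of_pos (half_pos hδ)]
      exact max_lt (half_lt_self hδ) (hsin.trans_lt (half_lt_self hδ))
    · rw [tendsto_const_nhds_iff, Prod.mk.injEq]
      exact fun h ↦ (half_pos hδ).ne' h.1
  · refine ⟨sin 1, sin_pos_of_pos_of_lt_pi one_pos hπ, fun x y hs h0 p hp ↦ ?_⟩
    obtain ⟨a, L, ha, hL⟩ := hs.exists_tendsto_of_norm_lt h0
    refine ⟨a, ?_⟩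
    rw [← hs.eq_mul_sin_of_tendsto ha hL]
    exact t2_iff_nhds.1 inferInstance (hp.clusterPt.mono (ha.prodMk_nhds hL))
end
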